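/- arXiv:1902.07604 — 5 statements merged into one kernel-verified Lean document; each statement's English description precedes it below -/
import Mathlib

section
/- Let a be a nondecreasing weight on (0,∞) and let g, h be nonnegative measurable functions on (0,∞). Then ess sup_{x∈(0,∞)} [ (ess sup_{t∈(0,∞)} 𝒜(x,t)·g(t)) · (ess sup_{t∈(0,∞)} 𝒜(t,x)·h(t)) ] ≈ ess sup_{x∈(0,∞)} [ g(x) · ess sup_{t∈(x,∞)} h(t) ] + ess sup_{x∈(0,∞)} [ a(x)^{−1} g(x) · ess sup_{t∈(0,x)} a(t) h(t) ], with equivalence constants independent of a, g and h. -/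
open MeasureTheory ENNReal Set

/-! Monotonicity of `a` gives `𝒜(x,t) ≥ 1/2` for `t < x` and `𝒜(x,t) ≥ a(x) / (2 a(t))` for
`x < t`, so at almost every `x` the left-hand side dominates, up to the factor `4`, both
`‖g‖_{∞,(0,x)} ‖h‖_{∞,(x,∞)}` and `‖g/a‖_{∞,(x,∞)} ‖a h‖_{∞,(0,x)}`. Each of these is a
nondecreasing times a nonincreasing function of `x`, and so it controls the corresponding term
on the right; the null sets are handled by choosing rationals between `x` and the inner
variable. Conversely, `𝒜(x,t) 𝒜(s,x)` is at most `1`, and at most `a(s) / a(t)`; using the first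
bound for `t < s` and the second for `s < t` bounds the left-hand side by the right-hand side. -/

section ENNRealInequalities

variable {u v w : ℝ≥0∞}

lemma ENNReal.div_add_le_one : u / (u + v) ≤ 1 :=
  ENNReal.div_le_of_le_mul (by rw [one_mul]; exact le_self_add)

lemma ENNReal.div_add_mul_div_add_le (hw₀ : w ≠ 0) (hw : w ≠ ∞) :
    w / (w + u) * (v / (v + w)) ≤ v / u :=
  calc w / (w + u) * (v / (v + w)) ≤ w / u * (v / w) :=
        mul_le_mul' (ENNReal.div_le_div_left le_add_self w) (ENNReal.div_le_div_left le_add_self v)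
    _ = v / u := by
        rw [div_eq_mul_inv, div_eq_mul_inv, div_eq_mul_inv,
          show w * u⁻¹ * (v * w⁻¹) = w * w⁻¹ * (v * u⁻¹) by ring, ENNReal.mul_inv_cancel hw₀ hw,
          one_mul]

lemma ENNReal.inv_two_mul_div_le_div_add (h : v ≤ w) : 2⁻¹ * (v / w) ≤ v / (v + w) :=
  calc 2⁻¹ * (v / w) = v / (2 * w) := by
        rw [div_eq_mul_inv, div_eq_mul_inv, ENNReal.mul_inv (by simp) (by simp)]; ring
    _ ≤ v / (v + w) := ENNReal.div_le_div_left (by rw [two_mul]; gcongr) v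

lemma ENNReal.inv_two_le_div_add (h : v ≤ w) (hw₀ : w ≠ 0) (hw : w ≠ ∞) : 2⁻¹ ≤ w / (w + v) :=
  calc 2⁻¹ = 2⁻¹ * (w / w) := by rw [ENNReal.div_self hw₀ hw, mul_one]
    _ ≤ w / (w + w) := ENNReal.inv_two_mul_div_le_div_add le_rfl
    _ ≤ w / (w + v) := ENNReal.div_le_div_left (by gcongr) w

lemma ENNReal.mul_le_four_mul_of_inv_two_mul_le {p q P Q : ℝ≥0∞} (hp : 2⁻¹ * p ≤ P)
    (hq : 2⁻¹ * q ≤ Q) : p * q ≤ 4 * (P * Q) :=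
  calc p * q = 4 * (2⁻¹ * 2⁻¹) * (p * q) := by
        rw [← ENNReal.mul_inv (by simp) (by simp), show (2 : ℝ≥0∞) * 2 = 4 by norm_num,
          ENNReal.mul_inv_cancel (by simp) (by simp), one_mul]
    _ = 4 * ((2⁻¹ * p) * (2⁻¹ * q)) := by ring
    _ ≤ 4 * (P * Q) := by gcongr

end ENNRealInequalities

section EssSupRestrict

variable {α : Type*} [MeasurableSpace α] {μ : Measure α} {f g : α → ℝ≥0∞} {s t : Set α}

lemma essSup_restrict_mono (hst : s ⊆ t) (hs : MeasurableSet s)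
    (hfg : ∀ᵐ x ∂μ, x ∈ s → f x ≤ g x) : essSup f (μ.restrict s) ≤ essSup g (μ.restrict t) :=
  (essSup_mono_ae ((ae_restrict_iff' hs).2 hfg)).trans
    (essSup_mono_measure' (Measure.restrict_mono hst le_rfl))

lemma le_essSup_restrict_of_forall_le {c : ℝ≥0∞} (hst : s ⊆ t) (hs : MeasurableSet s)
    (hμs : μ s ≠ 0) (hc : ∀ x ∈ s, c ≤ f x) : c ≤ essSup f (μ.restrict t) :=
  calc c = essSup (fun _ => c) (μ.restrict s) :=
        (essSup_const c (by rwa [Ne, Measure.restrict_eq_zero])).symm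
    _ ≤ essSup f (μ.restrict t) := essSup_restrict_mono hst hs (ae_of_all _ hc)

lemma ae_forall_le_essSup_restrict {ι : Type*} [Countable ι] (f : α → ℝ≥0∞) (S : ι → Set α) :
    ∀ᵐ x ∂μ, ∀ i, x ∈ S i → f x ≤ essSup f (μ.restrict (S i)) :=
  ae_all_iff.2 fun _ => ae_imp_of_ae_restrict (ae_le_essSup f)

end EssSupRestrict

local notation "esup[" s "] " f:max => essSup f (volume.restrict s)

noncomputable def splitEssSup (u v : ℝ → ℝ≥0∞) : ℝ≥0∞ :=
  esup[Ioi 0] (fun x => esup[Ioo 0 x] u * esup[Ioi x] v)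

section SplitEssSup

variable (u v : ℝ → ℝ≥0∞)

lemma essSup_Ioo_mul_essSup_Ioi_le_splitEssSup {y y' : ℝ} (hy : 0 ≤ y) (hyy' : y < y') :
    esup[Ioo 0 y] u * esup[Ioi y'] v ≤ splitEssSup u v := by
  refine le_essSup_restrict_of_forall_le (fun x hx => hy.trans_lt hx.1) measurableSet_Ioo
    (by simpa using hyy') fun x hx => ?_
  exact mul_le_mul' (essSup_mono_measure' (Measure.restrict_mono (Ioo_subset_Ioo_right hx.1.le)
    le_rfl)) (essSup_mono_measure' (Measure.restrict_mono (Ioi_subset_Ioi hx.2.le) le_rfl))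

lemma essSup_mul_essSup_Ioi_le_splitEssSup :
    esup[Ioi 0] (fun x => u x * esup[Ioi x] v) ≤ splitEssSup u v := by
  refine essSup_le_of_ae_le _ ((ae_restrict_iff' measurableSet_Ioi).2 ?_)
  filter_upwards [ae_forall_le_essSup_restrict u fun q : ℚ => Ioo 0 (q : ℝ)] with x hu hx
  rw [← essSup_const_mul]
  refine essSup_le_of_ae_le _ ((ae_restrict_iff' measurableSet_Ioi).2 ?_)
  filter_upwards [ae_forall_le_essSup_restrict v fun q : ℚ => Ioi (q : ℝ)] with s hv hxs
  obtain ⟨q, hxq, hqs⟩ := exists_rat_btwn (mem_Ioi.1 hxs)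
  obtain ⟨q', hqq', hq's⟩ := exists_rat_btwn hqs
  calc u x * v s ≤ esup[Ioo 0 (q : ℝ)] u * esup[Ioi (q' : ℝ)] v :=
        mul_le_mul' (hu q ⟨hx, hxq⟩) (hv q' hq's)
    _ ≤ splitEssSup u v :=
        essSup_Ioo_mul_essSup_Ioi_le_splitEssSup u v (hx.out.trans hxq).le hqq'

lemma essSup_mul_essSup_Ioo_le_splitEssSup :
    esup[Ioi 0] (fun x => u x * esup[Ioo 0 x] v) ≤ splitEssSup v u := by
  refine essSup_le_of_ae_le _ ((ae_restrict_iff' measurableSet_Ioi).2 ?_)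
  filter_upwards [ae_forall_le_essSup_restrict u fun q : ℚ => Ioi (q : ℝ)] with x hu hx
  rw [← essSup_const_mul]
  refine essSup_le_of_ae_le _ ((ae_restrict_iff' measurableSet_Ioo).2 ?_)
  filter_upwards [ae_forall_le_essSup_restrict v fun q : ℚ => Ioo 0 (q : ℝ)] with s hv hsx
  obtain ⟨q, hsq, hqx⟩ := exists_rat_btwn hsx.2
  obtain ⟨q', hqq', hq'x⟩ := exists_rat_btwn hqx
  calc u x * v s ≤ esup[Ioo 0 (q : ℝ)] v * esup[Ioi (q' : ℝ)] u := by
        rw [mul_comm]; exact mul_le_mul' (hv q ⟨hsx.1, hsq⟩) (hu q' hq'x)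
    _ ≤ splitEssSup v u :=
        essSup_Ioo_mul_essSup_Ioi_le_splitEssSup v u (hsx.1.trans hsq).le hqq'

end SplitEssSup

/-- The weight `𝒜(x,t)` of the paper. -/
noncomputable def gluingKernel (a : ℝ → ℝ≥0∞) (x t : ℝ) : ℝ≥0∞ := a x / (a x + a t)

noncomputable def gluedEssSup (a g h : ℝ → ℝ≥0∞) : ℝ≥0∞ :=
  esup[Ioi 0] (fun x => esup[Ioi 0] (fun t => gluingKernel a x t * g t) *
    esup[Ioi 0] (fun t => gluingKernel a t x * h t))

section GluedEssSup

variable {a g h : ℝ → ℝ≥0∞}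

lemma gluedEssSup_le (hae : ∀ᵐ x ∂(volume.restrict (Ioi (0:ℝ))), 0 < a x ∧ a x < ∞) :
    gluedEssSup a g h ≤ esup[Ioi 0] (fun x => g x * esup[Ioi x] h) +
      esup[Ioi 0] (fun x => (a x)⁻¹ * g x * esup[Ioo 0 x] (fun t => a t * h t)) := by
  set B₁ := esup[Ioi 0] (fun x => g x * esup[Ioi x] h)
  set B₂ := esup[Ioi 0] (fun x => (a x)⁻¹ * g x * esup[Ioo 0 x] (fun t => a t * h t))
  refine essSup_le_of_ae_le _ ?_
  filter_upwards [hae] with x ⟨hax₀, hax⟩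
  rw [mul_comm, ← essSup_const_mul]
  refine essSup_le_of_ae_le _ ((ae_restrict_iff' measurableSet_Ioi).2 ?_)
  filter_upwards [ae_imp_of_ae_restrict (ae_le_essSup _),
    ae_imp_of_ae_restrict (ae_le_essSup _)] with t (ht₁ : _ → _ ≤ B₁) (ht₂ : _ → _ ≤ B₂) ht
  rw [mul_comm, ← essSup_const_mul]
  refine essSup_le_of_ae_le _ ((ae_restrict_iff' measurableSet_Ioi).2 ?_)
  filter_upwards [ae_imp_of_ae_restrict (s := Ioi t) (ae_le_essSup h),
    ae_imp_of_ae_restrict (s := Ioo 0 t) (ae_le_essSup fun s => a s * h s),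
    measure_eq_zero_iff_ae_notMem.1 (measure_singleton t)] with s hs₁ hs₂ (hst : s ≠ t) hs
  rcases hst.lt_or_gt with hst | hst
  · calc gluingKernel a x t * g t * (gluingKernel a s x * h s)
          = gluingKernel a x t * gluingKernel a s x * (g t * h s) := by ring
      _ ≤ a s / a t * (g t * h s) := by
          gcongr; exact ENNReal.div_add_mul_div_add_le hax₀.ne' hax.ne
      _ = (a t)⁻¹ * g t * (a s * h s) := by rw [div_eq_mul_inv]; ring
      _ ≤ (a t)⁻¹ * g t * esup[Ioo 0 t] (fun s => a s * h s) := by gcongr; exact hs₂ ⟨hs, hst⟩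
      _ ≤ B₁ + B₂ := le_add_left (ht₂ ht)
  · calc gluingKernel a x t * g t * (gluingKernel a s x * h s)
        ≤ 1 * g t * (1 * h s) := by
          gcongr <;> exact ENNReal.div_add_le_one
      _ ≤ g t * esup[Ioi t] h := by rw [one_mul, one_mul]; gcongr; exact hs₁ hst
      _ ≤ B₁ + B₂ := le_add_right (ht₁ ht)

lemma splitEssSup_le_four_mul_gluedEssSup (hmono : MonotoneOn a (Ioi 0))
    (hae : ∀ᵐ x ∂(volume.restrict (Ioi (0:ℝ))), 0 < a x ∧ a x < ∞) :
    splitEssSup g h ≤ 4 * gluedEssSup a g h := by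
  rw [gluedEssSup, ← essSup_const_mul]
  refine essSup_mono_ae ?_
  filter_upwards [hae, ae_restrict_mem measurableSet_Ioi] with x ⟨hax₀, hax⟩ (hx : 0 < x)
  refine ENNReal.mul_le_four_mul_of_inv_two_mul_le ?_ ?_
  · rw [← essSup_const_mul]
    refine essSup_restrict_mono Ioo_subset_Ioi_self measurableSet_Ioo (ae_of_all _ fun t ht => ?_)
    gcongr
    exact ENNReal.inv_two_le_div_add (hmono ht.1 hx ht.2.le) hax₀.ne' hax.ne
  · rw [← essSup_const_mul]
    refine essSup_restrict_mono (Ioi_subset_Ioi hx.le) measurableSet_Ioi ?_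
    filter_upwards [ae_imp_of_ae_restrict hae] with t hat (hxt : x < t)
    obtain ⟨hat₀, hat⟩ := hat (hx.trans hxt)
    gcongr
    exact ENNReal.inv_two_le_div_add (hmono hx (hx.trans hxt) hxt.le) hat₀.ne' hat.ne

lemma splitEssSup_mul_inv_le_four_mul_gluedEssSup (hmono : MonotoneOn a (Ioi 0))
    (hae : ∀ᵐ x ∂(volume.restrict (Ioi (0:ℝ))), 0 < a x ∧ a x < ∞) :
    splitEssSup (fun t => a t * h t) (fun t => (a t)⁻¹ * g t) ≤ 4 * gluedEssSup a g h := by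
  rw [gluedEssSup, ← essSup_const_mul]
  refine essSup_mono_ae ?_
  filter_upwards [hae, ae_restrict_mem measurableSet_Ioi] with x ⟨hax₀, hax⟩ (hx : 0 < x)
  set K := esup[Ioo 0 x] (fun t => a t * h t)
  set L := esup[Ioi x] (fun t => (a t)⁻¹ * g t)
  have hT : 2⁻¹ * ((a x)⁻¹ * K) ≤ esup[Ioi 0] (fun t => gluingKernel a t x * h t) := by
    rw [← essSup_const_mul, ← essSup_const_mul]
    refine essSup_restrict_mono Ioo_subset_Ioi_self measurableSet_Ioo (ae_of_all _ fun t ht => ?_)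
    calc 2⁻¹ * ((a x)⁻¹ * (a t * h t)) = 2⁻¹ * (a t / a x) * h t := by
          rw [div_eq_mul_inv]; ring
      _ ≤ gluingKernel a t x * h t := by
          gcongr; exact ENNReal.inv_two_mul_div_le_div_add (hmono ht.1 hx ht.2.le)
  have hS : 2⁻¹ * (a x * L) ≤ esup[Ioi 0] (fun t => gluingKernel a x t * g t) := by
    rw [← essSup_const_mul, ← essSup_const_mul]
    refine essSup_restrict_mono (Ioi_subset_Ioi hx.le) measurableSet_Ioi
      (ae_of_all _ fun t (hxt : x < t) => ?_)
    calc 2⁻¹ * (a x * ((a t)⁻¹ * g t)) = 2⁻¹ * (a x / a t) * g t := by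
          rw [div_eq_mul_inv]; ring
      _ ≤ gluingKernel a x t * g t := by
          gcongr; exact ENNReal.inv_two_mul_div_le_div_add (hmono hx (hx.trans hxt) hxt.le)
  calc K * L = (a x)⁻¹ * K * (a x * L) := by
        rw [mul_mul_mul_comm, ENNReal.inv_mul_cancel hax₀.ne' hax.ne, one_mul]
    _ ≤ 4 * (esup[Ioi 0] (fun t => gluingKernel a t x * h t) *
          esup[Ioi 0] (fun t => gluingKernel a x t * g t)) :=
        ENNReal.mul_le_four_mul_of_inv_two_mul_le hT hS
    _ = _ := by rw [mul_comm (esup[Ioi 0] _)]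

end GluedEssSup

/-- Gluing lemma (Lemma 2.1): for a nondecreasing weight `a` on `(0,∞)` and nonnegative
measurable `g, h`, with `𝒜(x,t) = a x / (a x + a t)`,
`esssup_x (esssup_t 𝒜(x,t) g t) (esssup_t 𝒜(t,x) h t)
  ≈ esssup_x g x (esssup_{t>x} h t) + esssup_x (a x)⁻¹ g x (esssup_{t<x} a t * h t)`,
with equivalence constants independent of `a`, `g`, `h`. -/
theorem gluing_esssup_esssup :
    ∃ c C : ℝ≥0∞, 0 < c ∧ c < ∞ ∧ 0 < C ∧ C < ∞ ∧
      ∀ a g h : ℝ → ℝ≥0∞, Measurable a → Measurable g → Measurable h →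
        MonotoneOn a (Ioi 0) →
        (∀ᵐ x ∂(volume.restrict (Ioi (0:ℝ))), 0 < a x ∧ a x < ∞) →
        let A := essSup (fun x =>
            (essSup (fun t => a x / (a x + a t) * g t) (volume.restrict (Ioi (0:ℝ)))) *
            (essSup (fun t => a t / (a t + a x) * h t) (volume.restrict (Ioi (0:ℝ)))))
          (volume.restrict (Ioi (0:ℝ)))
        let B := essSup (fun x => g x * essSup h (volume.restrict (Ioi x)))
            (volume.restrict (Ioi (0:ℝ)))
          + essSup (fun x => (a x)⁻¹ * g x *
              essSup (fun t => a t * h t) (volume.restrict (Ioo (0:ℝ) x)))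
            (volume.restrict (Ioi (0:ℝ)))
        c * B ≤ A ∧ A ≤ C * B := by
  refine ⟨8⁻¹, 1, by simp, by simp, one_pos, one_lt_top, ?_⟩
  intro a g h _ _ _ hmono hae A B
  have hBA : B ≤ 8 * A :=
    calc B ≤ splitEssSup g h + splitEssSup (fun t => a t * h t) (fun t => (a t)⁻¹ * g t) :=
          add_le_add (essSup_mul_essSup_Ioi_le_splitEssSup g h)
            (essSup_mul_essSup_Ioo_le_splitEssSup _ _)
      _ ≤ 4 * A + 4 * A :=
          add_le_add (splitEssSup_le_four_mul_gluedEssSup hmono hae)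
            (splitEssSup_mul_inv_le_four_mul_gluedEssSup hmono hae)
      _ = 8 * A := by ring
  refine ⟨(ENNReal.inv_mul_le_iff (by simp) (by simp)).2 hBA, ?_⟩
  rw [one_mul]
  exact gluedEssSup_le hae
end

section
/- Let β > 0, let a be a nondecreasing weight on (0,∞) and let g, h be nonnegative measurable functions on (0,∞). Then ess sup_{x∈(0,∞)} [ (ess sup_{t∈(0,∞)} 𝒜(x,t)·g(t)) · (∫_0^∞ 𝒜(t,x)^β h(t) dt)^{1/β} ] ≈ ess sup_{x∈(0,∞)} [ g(x) (∫_x^∞ h(t) dt)^{1/β} ] + ess sup_{x∈(0,∞)} [ a(x)^{−1} g(x) (∫_0^x a(t)^β h(t) dt)^{1/β} ], with equivalence constants depending only on β. -/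
/-!
Write `T x = ∫₀^∞ 𝒜(t,x)^β h(t) dt` and `S x = ess sup_t 𝒜(x,t) g(t)`, so that the left-hand side
is `ess sup S T^{1/β}`. It is equivalent to `ess sup g T^{1/β}`:
* the kernel satisfies `𝒜(x,t) 𝒜(s,x) ≤ 𝒜(s,t)`, hence `𝒜(x,t)^β T x ≤ T t`, and so
  `S x T(x)^{1/β} ≤ ess sup g T^{1/β}`;
* `g ≤ 3 S` a.e.: `k/(k + a s) g(s)` is bounded by its essential supremum in `s` for all
  rational `k` simultaneously, and at `t` one takes a rational `k ∈ (a(t)/2, a(t))`.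
Splitting `T x` at `x` gives `T x ≤ ∫_x^∞ h + a(x)^{-β} ∫_0^x a^β h`; for nondecreasing `a` the
kernel is at least `1/2` on `(x,∞)` and at least `a(t)/(2a(x))` on `(0,x)`, which gives the
reverse bounds.
-/

open MeasureTheory ENNReal Set

local notation "μ₀" => volume.restrict (Ioi (0:ℝ))

namespace ENNReal

variable {u v w : ℝ≥0∞}

theorem div_add_eq_inv_one_add_div (hu0 : u ≠ 0) (hu : u ≠ ∞) :
    u / (u + v) = (1 + v / u)⁻¹ := by
  rw [← ENNReal.div_self hu0 hu, ← ENNReal.add_div, ENNReal.inv_div (Or.inl hu) (Or.inl hu0)]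

theorem div_add_le_div_add (huv : u ≤ v) (hu0 : u ≠ 0) (hv : v ≠ ∞) :
    u / (u + w) ≤ v / (v + w) := by
  rw [div_add_eq_inv_one_add_div hu0 (ne_top_of_le_ne_top hv huv),
    div_add_eq_inv_one_add_div (hu0.bot_lt.trans_le huv).ne' hv]
  gcongr

theorem inv_two_le_div_add_s1 (hvu : v ≤ u) (hu0 : u ≠ 0) (hu : u ≠ ∞) : 2⁻¹ ≤ u / (u + v) := by
  rw [div_add_eq_inv_one_add_div hu0 hu, ← one_add_one_eq_two]
  gcongr
  exact ENNReal.div_le_of_le_mul (by rwa [one_mul])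

theorem div_add_mul_div_add_le_s1 (hu0 : u ≠ 0) (hu : u ≠ ∞) (hv0 : v ≠ 0) (hv : v ≠ ∞)
    (hw : w ≠ ∞) : v / (v + w) * (u / (u + v)) ≤ u / (u + w) := by
  have hfin : u / (u + w) ≠ ∞ := (ENNReal.div_lt_top hu (by simp [hu0])).ne
  rw [← ENNReal.toReal_le_toReal (by finiteness) hfin]
  simp only [toReal_mul, toReal_div, toReal_add hu hv, toReal_add hv hw, toReal_add hu hw]
  have hu' := ENNReal.toReal_pos hu0 hu
  have hv' := ENNReal.toReal_pos hv0 hv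
  have hw' : 0 ≤ w.toReal := toReal_nonneg
  rw [div_mul_div_comm, div_le_div_iff₀ (by positivity) (by positivity)]
  nlinarith [_root_.mul_pos (_root_.mul_pos hu' hv') hv', mul_nonneg (mul_nonneg hu'.le hu'.le) hw']

theorem rpow_mul_rpow_one_div {β : ℝ} (hβ : 0 < β) (c u : ℝ≥0∞) :
    (c ^ β * u) ^ (1 / β) = c * u ^ (1 / β) := by
  rw [ENNReal.mul_rpow_of_nonneg _ _ (by positivity), ← ENNReal.rpow_mul, mul_one_div_cancel hβ.ne',
    ENNReal.rpow_one]

theorem add_rpow_le_two_rpow_mul {p : ℝ} (hp : 0 ≤ p) (u v : ℝ≥0∞) :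
    (u + v) ^ p ≤ 2 ^ p * (u ^ p + v ^ p) := by
  calc (u + v) ^ p ≤ (2 * max u v) ^ p := by
        gcongr; rw [two_mul]; exact add_le_add (le_max_left _ _) (le_max_right _ _)
    _ = 2 ^ p * max u v ^ p := ENNReal.mul_rpow_of_nonneg _ _ hp
    _ ≤ 2 ^ p * (u ^ p + v ^ p) := by
        gcongr
        rcases le_total u v with h | h
        · rw [max_eq_right h]; exact le_add_self
        · rw [max_eq_left h]; exact le_self_add

end ENNReal

theorem ae_le_three_mul_essSup_div_add_mul {α : Type*} [MeasurableSpace α] {μ : Measure α}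
    {a : α → ℝ≥0∞} (g : α → ℝ≥0∞) (ha : ∀ᵐ t ∂μ, a t ≠ 0 ∧ a t ≠ ∞) :
    ∀ᵐ t ∂μ, g t ≤ 3 * essSup (fun s => a t / (a t + a s) * g s) μ := by
  have hq : ∀ᵐ t ∂μ, ∀ q : ℚ, (Real.toNNReal q : ℝ≥0∞) / (Real.toNNReal q + a t) * g t ≤
      essSup (fun s => (Real.toNNReal q : ℝ≥0∞) / (Real.toNNReal q + a s) * g s) μ :=
    ae_all_iff.mpr fun q => ENNReal.ae_le_essSup _
  filter_upwards [ha, hq] with t ⟨ht0, ht⟩ htq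
  obtain ⟨q, -, hq_lo, hq_hi⟩ := ENNReal.lt_iff_exists_rat_btwn.mp (ENNReal.half_lt_self ht0 ht)
  set k : ℝ≥0∞ := (Real.toNNReal q : ℝ≥0∞)
  have hk0 : k ≠ 0 := (pos_of_gt hq_lo).ne'
  have hkernel : 3⁻¹ ≤ k / (k + a t) := by
    rw [ENNReal.div_add_eq_inv_one_add_div hk0 coe_ne_top]
    gcongr
    have hat : a t ≤ 2 * k :=
      (mul_comm k 2 ▸ (ENNReal.div_lt_iff (by simp) (by simp)).mp hq_lo).le
    calc 1 + a t / k ≤ 1 + 2 := by gcongr; exact ENNReal.div_le_of_le_mul hat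
      _ = 3 := by norm_num
  calc g t = 3 * (3⁻¹ * g t) := (ENNReal.mul_inv_cancel_left (by norm_num) (by norm_num)).symm
    _ ≤ 3 * (k / (k + a t) * g t) := by gcongr
    _ ≤ 3 * essSup (fun s => k / (k + a s) * g s) μ := by gcongr; exact htq q
    _ ≤ 3 * essSup (fun s => a t / (a t + a s) * g s) μ := by
        gcongr
        exact essSup_mono_ae (ae_of_all _ fun s =>
          mul_le_mul_left (ENNReal.div_add_le_div_add hq_hi.le hk0 ht) _)

theorem essSup_mul_le_three_mul_essSup_essSup_mul {α : Type*} [MeasurableSpace α] {μ : Measure α}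
    {a : α → ℝ≥0∞} (g φ : α → ℝ≥0∞) (ha : ∀ᵐ t ∂μ, a t ≠ 0 ∧ a t ≠ ∞) :
    essSup (fun x => g x * φ x) μ ≤
      3 * essSup (fun x => essSup (fun t => a x / (a x + a t) * g t) μ * φ x) μ := by
  rw [← ENNReal.essSup_const_mul]
  refine essSup_mono_ae ?_
  filter_upwards [ae_le_three_mul_essSup_div_add_mul g ha] with x hx
  rw [← mul_assoc]
  gcongr

noncomputable def kernelIntegral (β : ℝ) (a h : ℝ → ℝ≥0∞) (x : ℝ) : ℝ≥0∞ :=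
  ∫⁻ t in Ioi (0:ℝ), (a t / (a t + a x)) ^ β * h t

section kernelIntegral

variable {β : ℝ} {a h : ℝ → ℝ≥0∞} {x : ℝ}

theorem kernelIntegral_le (hβ : 0 ≤ β) (hx : a x ≠ 0) :
    kernelIntegral β a h x ≤
      (∫⁻ t in Ioi x, h t) + (a x)⁻¹ ^ β * ∫⁻ t in Ioo 0 x, a t ^ β * h t := by
  have hsplit : Ioi (0:ℝ) ⊆ Ioo 0 x ∪ Ici x := fun t ht => by
    rcases lt_or_ge t x with htx | htx
    exacts [Or.inl ⟨ht, htx⟩, Or.inr htx]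
  calc kernelIntegral β a h x
      ≤ ∫⁻ t in Ioo 0 x ∪ Ici x, (a t / (a t + a x)) ^ β * h t := lintegral_mono_set hsplit
    _ ≤ (∫⁻ t in Ioo 0 x, (a t / (a t + a x)) ^ β * h t)
          + ∫⁻ t in Ici x, (a t / (a t + a x)) ^ β * h t := lintegral_union_le _ _ _
    _ ≤ (∫⁻ t in Ioo 0 x, (a x)⁻¹ ^ β * (a t ^ β * h t)) + ∫⁻ t in Ici x, h t := by
        refine add_le_add (lintegral_mono fun t => ?_) (lintegral_mono fun t => ?_)
        · rw [← mul_assoc, ← ENNReal.mul_rpow_of_nonneg _ _ hβ, mul_comm _ (a t), ← div_eq_mul_inv]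
          gcongr
          exact le_add_self
        · calc (a t / (a t + a x)) ^ β * h t ≤ 1 ^ β * h t := by
                gcongr; exact ENNReal.div_le_of_le_mul (by rw [one_mul]; exact le_self_add)
            _ = h t := by rw [ENNReal.one_rpow, one_mul]
    _ = _ := by
        rw [lintegral_const_mul' _ _ (rpow_ne_top_of_nonneg hβ (inv_ne_top.mpr hx)),
          setLIntegral_congr Ioi_ae_eq_Ici, add_comm]

theorem inv_two_rpow_mul_le_kernelIntegral (hβ : 0 ≤ β) (hmono : MonotoneOn a (Ioi 0))
    (hae : ∀ᵐ t ∂μ₀, 0 < a t ∧ a t < ∞) (hx : 0 < x) :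
    2⁻¹ ^ β * ∫⁻ t in Ioi x, h t ≤ kernelIntegral β a h x := by
  have hae' : ∀ᵐ t ∂volume.restrict (Ioi x), 0 < a t ∧ a t < ∞ :=
    ae_restrict_of_ae_restrict_of_subset (Ioi_subset_Ioi hx.le) hae
  calc 2⁻¹ ^ β * ∫⁻ t in Ioi x, h t ≤ ∫⁻ t in Ioi x, 2⁻¹ ^ β * h t := lintegral_const_mul_le _ _
    _ ≤ ∫⁻ t in Ioi x, (a t / (a t + a x)) ^ β * h t := by
        refine lintegral_mono_ae ?_
        filter_upwards [hae', ae_restrict_mem measurableSet_Ioi] with t ht htx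
        gcongr
        exact ENNReal.inv_two_le_div_add_s1 (hmono hx (hx.trans htx) htx.le) ht.1.ne' ht.2.ne
    _ ≤ kernelIntegral β a h x := lintegral_mono_set (Ioi_subset_Ioi hx.le)

theorem inv_two_mul_rpow_mul_le_kernelIntegral (hβ : 0 ≤ β) (hmono : MonotoneOn a (Ioi 0))
    (hx : 0 < x) :
    (2 * a x)⁻¹ ^ β * ∫⁻ t in Ioo 0 x, a t ^ β * h t ≤ kernelIntegral β a h x := by
  calc (2 * a x)⁻¹ ^ β * ∫⁻ t in Ioo 0 x, a t ^ β * h t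
      ≤ ∫⁻ t in Ioo 0 x, (2 * a x)⁻¹ ^ β * (a t ^ β * h t) := lintegral_const_mul_le _ _
    _ ≤ ∫⁻ t in Ioo 0 x, (a t / (a t + a x)) ^ β * h t := by
        refine setLIntegral_mono' measurableSet_Ioo fun t ht => ?_
        rw [← mul_assoc, ← ENNReal.mul_rpow_of_nonneg _ _ hβ, mul_comm _ (a t), ← div_eq_mul_inv]
        gcongr
        rw [two_mul]
        gcongr
        exact hmono ht.1 hx ht.2.le
    _ ≤ kernelIntegral β a h x := lintegral_mono_set fun t ht => ht.1

theorem div_add_rpow_mul_kernelIntegral_le (hβ : 0 ≤ β) (hae : ∀ᵐ t ∂μ₀, 0 < a t ∧ a t < ∞)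
    {y : ℝ} (hx : 0 < a x ∧ a x < ∞) (hy : a y < ∞) :
    (a x / (a x + a y)) ^ β * kernelIntegral β a h x ≤ kernelIntegral β a h y := by
  refine (lintegral_const_mul_le _ _).trans (lintegral_mono_ae ?_)
  filter_upwards [hae] with t ht
  rw [← mul_assoc, ← ENNReal.mul_rpow_of_nonneg _ _ hβ]
  gcongr
  exact ENNReal.div_add_mul_div_add_le_s1 ht.1.ne' ht.2.ne hx.1.ne' hx.2.ne hy.ne

end kernelIntegral

section essSup

variable {β : ℝ} {a g h : ℝ → ℝ≥0∞}

theorem essSup_essSup_mul_rpow_kernelIntegral_le (hβ : 0 < β)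
    (hae : ∀ᵐ t ∂μ₀, 0 < a t ∧ a t < ∞) :
    essSup (fun x => essSup (fun t => a x / (a x + a t) * g t) μ₀ *
        kernelIntegral β a h x ^ (1 / β)) μ₀ ≤
      essSup (fun x => g x * kernelIntegral β a h x ^ (1 / β)) μ₀ := by
  refine essSup_le_of_ae_le _ ?_
  filter_upwards [hae] with x hx
  rw [mul_comm, ← ENNReal.essSup_const_mul]
  refine essSup_le_of_ae_le _ ?_
  filter_upwards [hae, ENNReal.ae_le_essSup fun t => g t * kernelIntegral β a h t ^ (1 / β)]
    with t ht hgt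
  have hkernel : a x / (a x + a t) * kernelIntegral β a h x ^ (1 / β) ≤
      kernelIntegral β a h t ^ (1 / β) := by
    rw [← ENNReal.rpow_mul_rpow_one_div hβ]
    gcongr
    exact div_add_rpow_mul_kernelIntegral_le hβ.le hae hx ht.2
  calc kernelIntegral β a h x ^ (1 / β) * (a x / (a x + a t) * g t)
      = g t * (a x / (a x + a t) * kernelIntegral β a h x ^ (1 / β)) := by ring
    _ ≤ g t * kernelIntegral β a h t ^ (1 / β) := by gcongr
    _ ≤ _ := hgt

theorem essSup_mul_rpow_kernelIntegral_le (hβ : 0 < β) (hae : ∀ᵐ t ∂μ₀, 0 < a t ∧ a t < ∞) :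
    essSup (fun x => g x * kernelIntegral β a h x ^ (1 / β)) μ₀ ≤
      2 ^ (1 / β) * (essSup (fun x => g x * (∫⁻ t in Ioi x, h t) ^ (1 / β)) μ₀ +
        essSup (fun x => (a x)⁻¹ * g x * (∫⁻ t in Ioo 0 x, a t ^ β * h t) ^ (1 / β)) μ₀) := by
  refine (essSup_mono_ae ?_).trans ((ENNReal.essSup_const_mul).trans_le
    (mul_le_mul_right (ENNReal.essSup_add_le _ _) _))
  filter_upwards [hae] with x hx
  have hT := kernelIntegral_le (h := h) hβ.le hx.1.ne'
  calc g x * kernelIntegral β a h x ^ (1 / β)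
      ≤ g x * (2 ^ (1 / β) * ((∫⁻ t in Ioi x, h t) ^ (1 / β) +
          ((a x)⁻¹ ^ β * ∫⁻ t in Ioo 0 x, a t ^ β * h t) ^ (1 / β))) := by
        gcongr
        exact (ENNReal.rpow_le_rpow hT (by positivity)).trans
          (ENNReal.add_rpow_le_two_rpow_mul (by positivity) _ _)
    _ = 2 ^ (1 / β) * (g x * (∫⁻ t in Ioi x, h t) ^ (1 / β) +
          (a x)⁻¹ * g x * (∫⁻ t in Ioo 0 x, a t ^ β * h t) ^ (1 / β)) := by
        rw [ENNReal.rpow_mul_rpow_one_div hβ]; ring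

theorem essSup_add_essSup_le_four_mul (hβ : 0 < β) (hmono : MonotoneOn a (Ioi 0))
    (hae : ∀ᵐ t ∂μ₀, 0 < a t ∧ a t < ∞) :
    essSup (fun x => g x * (∫⁻ t in Ioi x, h t) ^ (1 / β)) μ₀ +
        essSup (fun x => (a x)⁻¹ * g x * (∫⁻ t in Ioo 0 x, a t ^ β * h t) ^ (1 / β)) μ₀ ≤
      4 * essSup (fun x => g x * kernelIntegral β a h x ^ (1 / β)) μ₀ := by
  have hpointwise : ∀ᵐ x ∂μ₀,
      (∫⁻ t in Ioi x, h t) ^ (1 / β) ≤ 2 * kernelIntegral β a h x ^ (1 / β) ∧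
      (a x)⁻¹ * (∫⁻ t in Ioo 0 x, a t ^ β * h t) ^ (1 / β) ≤
        2 * kernelIntegral β a h x ^ (1 / β) := by
    filter_upwards [ae_restrict_mem measurableSet_Ioi] with x hx
    constructor
    · rw [← ENNReal.inv_mul_le_iff two_ne_zero ofNat_ne_top, ← ENNReal.rpow_mul_rpow_one_div hβ]
      gcongr
      exact inv_two_rpow_mul_le_kernelIntegral hβ.le hmono hae hx
    · rw [← ENNReal.inv_mul_le_iff two_ne_zero ofNat_ne_top, ← mul_assoc,
        ← ENNReal.mul_inv (Or.inl two_ne_zero) (Or.inl ofNat_ne_top),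
        ← ENNReal.rpow_mul_rpow_one_div hβ]
      gcongr
      exact inv_two_mul_rpow_mul_le_kernelIntegral hβ.le hmono hx
  calc _ ≤ essSup (fun x => 2 * (g x * kernelIntegral β a h x ^ (1 / β))) μ₀ +
        essSup (fun x => 2 * (g x * kernelIntegral β a h x ^ (1 / β))) μ₀ := by
        gcongr <;> refine essSup_mono_ae ?_
        · filter_upwards [hpointwise] with x hx
          calc g x * (∫⁻ t in Ioi x, h t) ^ (1 / β)
              ≤ g x * (2 * kernelIntegral β a h x ^ (1 / β)) := by gcongr g x * ?_; exact hx.1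
            _ = _ := by ring
        · filter_upwards [hpointwise] with x hx
          calc (a x)⁻¹ * g x * (∫⁻ t in Ioo 0 x, a t ^ β * h t) ^ (1 / β)
              = g x * ((a x)⁻¹ * (∫⁻ t in Ioo 0 x, a t ^ β * h t) ^ (1 / β)) := by ring
            _ ≤ g x * (2 * kernelIntegral β a h x ^ (1 / β)) := by gcongr g x * ?_; exact hx.2
            _ = _ := by ring
    _ = 4 * essSup (fun x => g x * kernelIntegral β a h x ^ (1 / β)) μ₀ := by
        rw [ENNReal.essSup_const_mul, ← add_mul]; norm_num

end essSup

/-- Gluing lemma (Lemma 2.2): for `β > 0`, a nondecreasing weight `a` on `(0,∞)` and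
nonnegative measurable `g, h`, with `𝒜(x,t) = a x / (a x + a t)`,
`esssup_x (esssup_t 𝒜(x,t) g t) (∫_0^∞ 𝒜(t,x)^β h t dt)^{1/β}
  ≈ esssup_x g x (∫_x^∞ h)^{1/β} + esssup_x (a x)⁻¹ g x (∫_0^x a^β h)^{1/β}`,
with equivalence constants depending only on `β`. -/
theorem gluing_esssup_integral (β : ℝ) (hβ : 0 < β) :
    ∃ c C : ℝ≥0∞, 0 < c ∧ c < ∞ ∧ 0 < C ∧ C < ∞ ∧
      ∀ a g h : ℝ → ℝ≥0∞, Measurable a → Measurable g → Measurable h →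
        MonotoneOn a (Ioi 0) →
        (∀ᵐ x ∂(volume.restrict (Ioi (0:ℝ))), 0 < a x ∧ a x < ∞) →
        let A := essSup (fun x =>
            (essSup (fun t => a x / (a x + a t) * g t) (volume.restrict (Ioi (0:ℝ)))) *
            (∫⁻ t in Ioi (0:ℝ), (a t / (a t + a x)) ^ β * h t) ^ (1 / β))
          (volume.restrict (Ioi (0:ℝ)))
        let B := essSup (fun x => g x * (∫⁻ t in Ioi x, h t) ^ (1 / β))
            (volume.restrict (Ioi (0:ℝ)))
          + essSup (fun x => (a x)⁻¹ * g x *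
              (∫⁻ t in Ioo (0:ℝ) x, a t ^ β * h t) ^ (1 / β))
            (volume.restrict (Ioi (0:ℝ)))
        c * B ≤ A ∧ A ≤ C * B := by
  refine ⟨12⁻¹, 2 ^ (1 / β), by simp, by simp, by positivity,
    ENNReal.rpow_lt_top_of_nonneg (by positivity) ofNat_ne_top, ?_⟩
  intro a g h _ _ _ hmono hae A B
  have hA_le : A ≤ essSup (fun x => g x * kernelIntegral β a h x ^ (1 / β)) μ₀ :=
    essSup_essSup_mul_rpow_kernelIntegral_le hβ hae
  have hle_A : essSup (fun x => g x * kernelIntegral β a h x ^ (1 / β)) μ₀ ≤ 3 * A :=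
    essSup_mul_le_three_mul_essSup_essSup_mul g _ (hae.mono fun x hx => ⟨hx.1.ne', hx.2.ne⟩)
  have hB_le : B ≤ 4 * essSup (fun x => g x * kernelIntegral β a h x ^ (1 / β)) μ₀ :=
    essSup_add_essSup_le_four_mul hβ hmono hae
  refine ⟨?_, hA_le.trans (essSup_mul_rpow_kernelIntegral_le hβ hae)⟩
  calc 12⁻¹ * B ≤ 12⁻¹ * (4 * (3 * A)) := by gcongr; exact hB_le.trans (by gcongr)
    _ = A := by
      rw [← mul_assoc 4, show (4 * 3 : ℝ≥0∞) = 12 by norm_num,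
        ENNReal.inv_mul_cancel_left (by norm_num) (by norm_num)]
end

section
/- Let α, β > 0, let a be a nondecreasing weight on (0,∞) and let g, h be nonnegative measurable functions on (0,∞). Then ess sup_{x∈(0,∞)} [ (∫_0^∞ 𝒜(x,t)^β g(t) dt)^{1/β} · (∫_0^∞ 𝒜(t,x)^α h(t) dt)^{1/α} ] ≈ ess sup_{x∈(0,∞)} [ (∫_0^x g(t) dt)^{1/β} (∫_x^∞ h(t) dt)^{1/α} ] + ess sup_{x∈(0,∞)} [ (∫_x^∞ a(t)^{−β} g(t) dt)^{1/β} (∫_0^x a(t)^α h(t) dt)^{1/α} ], with equivalence constants depending only on α and β. -/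
/-!
Fix `x` and write `P`, `Q` for the two integrals on the left at `x`. Since
`𝒜(x,t) ≤ min (1, a(x)/a(t))`, cutting at any point `c` gives `P ≤ G(c) + a(x)^β K(c)` and
`Q ≤ H(c) + a(x)^(-α) L(c)`, where `G, H` are the integrals of `g` over `(0,c)` and of `h` over
`(c,∞)`, and `K, L` those of `a^(-β) g` over `(c,∞)` and of `a^α h` over `(0,c)`. At each cut
one of the two summands dominates in each bound. If the `K`- and `L`-summands dominate together
somewhere, we are done. Otherwise, at `c₀ = inf {c | P ≤ 2 G(c)}`, left continuity of `G` and
right continuity of `H` pair `P` with `G` and `Q` with `H` at nearby common points. Letting `c`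
range over `[-∞, ∞]` removes the degenerate cases `c₀ ∈ {0, ∞}`, and the same continuity turns
suprema over `c` into essential suprema.

The lower bound holds pointwise: for `a` nondecreasing, `𝒜(x,t) ≥ 1/2` for `t < x` and
`𝒜(x,t) ≥ a(x)/(2 a(t))` for `t > x`, and symmetrically for `𝒜(t,x)`.
-/

open MeasureTheory ENNReal Set Filter

theorem ENNReal.iSup₂_rpow {ι : Sort*} {κ : ι → Sort*} (f : (i : ι) → κ i → ℝ≥0∞) {p : ℝ}
    (hp : 0 < p) : (⨆ i, ⨆ j, f i j) ^ p = ⨆ i, ⨆ j, f i j ^ p :=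
  (orderIsoRpow p hp).map_iSup₂ f

theorem rpow_mul_le_of_le_iSup₂ {ι : Type*} {r : ι → Prop} {y : ι → ℝ≥0∞} {x z T : ℝ≥0∞}
    {p : ℝ} (hp : 0 < p) (hx : x ≤ ⨆ i, ⨆ (_ : r i), y i) (h : ∀ i, r i → y i ^ p * z ≤ T) :
    x ^ p * z ≤ T :=
  calc x ^ p * z ≤ (⨆ i, ⨆ (_ : r i), y i) ^ p * z := by gcongr
    _ = ⨆ i, ⨆ (_ : r i), y i ^ p * z := by
      simp only [ENNReal.iSup₂_rpow _ hp, ENNReal.iSup_mul]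
    _ ≤ T := iSup₂_le h

theorem le_two_mul_or_le_two_mul_of_le_add {P a b : ℝ≥0∞} (h : P ≤ a + b) :
    P ≤ 2 * a ∨ P ≤ 2 * b := by
  rcases le_total a b with hab | hab
  · exact Or.inr (h.trans (by rw [two_mul]; gcongr))
  · exact Or.inl (h.trans (by rw [two_mul]; gcongr))

theorem rpow_mul_rpow_le_of_le_two_mul {P Q u v : ℝ≥0∞} {p q : ℝ} (hp : 0 ≤ p) (hq : 0 ≤ q)
    (hP : P ≤ 2 * u) (hQ : Q ≤ 2 * v) :
    P ^ p * Q ^ q ≤ 2 ^ p * 2 ^ q * (u ^ p * v ^ q) :=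
  calc P ^ p * Q ^ q ≤ (2 * u) ^ p * (2 * v) ^ q := by gcongr
    _ = 2 ^ p * 2 ^ q * (u ^ p * v ^ q) := by
      rw [mul_rpow_of_nonneg _ _ hp, mul_rpow_of_nonneg _ _ hq]; ring

theorem div_rpow_eq_mul_rpow_neg (r s : ℝ≥0∞) {β : ℝ} (hβ : 0 ≤ β) :
    (r / s) ^ β = r ^ β * s ^ (-β) := by
  rw [div_rpow_of_nonneg _ _ hβ, div_eq_mul_inv, rpow_neg]

theorem div_add_rpow_le_one (r s : ℝ≥0∞) {β : ℝ} (hβ : 0 ≤ β) : (r / (r + s)) ^ β ≤ 1 :=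
  rpow_le_one (ENNReal.div_le_of_le_mul (by rw [one_mul]; exact le_self_add)) hβ

theorem div_add_rpow_le (r s : ℝ≥0∞) {β : ℝ} (hβ : 0 ≤ β) :
    (r / (r + s)) ^ β ≤ r ^ β * s ^ (-β) := by
  rw [← div_rpow_eq_mul_rpow_neg r s hβ]
  exact rpow_le_rpow (ENNReal.div_le_div_left le_add_self r) hβ

theorem div_max_le_two_mul_div_add (r s : ℝ≥0∞) : r / max r s ≤ 2 * (r / (r + s)) := by
  rw [← ENNReal.mul_div_mul_left r (max r s) two_ne_zero ofNat_ne_top, ← mul_div_assoc]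
  refine ENNReal.div_le_div_left ?_ _
  rw [two_mul]
  exact add_le_add (le_max_left r s) (le_max_right r s)

theorem div_max_rpow_mul_le (r s k : ℝ≥0∞) {β : ℝ} (hβ : 0 ≤ β) :
    (r / max r s) ^ β * k ≤ 2 ^ β * ((r / (r + s)) ^ β * k) := by
  rw [← mul_assoc, ← mul_rpow_of_nonneg _ _ hβ]
  gcongr
  exact div_max_le_two_mul_div_add r s

theorem rpow_mul_rpow_neg_cancel {r : ℝ≥0∞} (hr0 : r ≠ 0) (hrt : r ≠ ⊤) {α β : ℝ}
    (hα : 0 < α) (hβ : 0 < β) (X Y : ℝ≥0∞) :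
    (r ^ β * X) ^ (1 / β) * (r ^ (-α) * Y) ^ (1 / α) = X ^ (1 / β) * Y ^ (1 / α) := by
  rw [mul_rpow_of_nonneg _ _ (one_div_pos.2 hβ).le, mul_rpow_of_nonneg _ _ (one_div_pos.2 hα).le,
    ← rpow_mul, ← rpow_mul, mul_one_div_cancel hβ.ne', neg_mul, mul_one_div_cancel hα.ne',
    rpow_one, rpow_neg_one, mul_mul_mul_comm, ENNReal.mul_inv_cancel hr0 hrt, one_mul]

theorem rpow_one_div_mul_rpow_one_div_le_four_mul {X Y P Q : ℝ≥0∞} {α β : ℝ} (hα : 0 < α)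
    (hβ : 0 < β) (hX : X ≤ 2 ^ β * P) (hY : Y ≤ 2 ^ α * Q) :
    X ^ (1 / β) * Y ^ (1 / α) ≤ 4 * (P ^ (1 / β) * Q ^ (1 / α)) :=
  calc X ^ (1 / β) * Y ^ (1 / α) ≤ (2 ^ β * P) ^ (1 / β) * (2 ^ α * Q) ^ (1 / α) := by gcongr
    _ = 4 * (P ^ (1 / β) * Q ^ (1 / α)) := by
      rw [mul_rpow_of_nonneg _ _ (one_div_pos.2 hβ).le,
        mul_rpow_of_nonneg _ _ (one_div_pos.2 hα).le, ← rpow_mul, ← rpow_mul,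
        mul_one_div_cancel hβ.ne', mul_one_div_cancel hα.ne', rpow_one]
      ring

theorem rpow_mul_rpow_le_of_le_two_mul_of_forall_lt {ι : Type*} [Preorder ι] {p q : ℝ}
    (hp : 0 < p) (hq : 0 < q) {G H : ι → ℝ≥0∞} {P Q : ℝ≥0∞} {c : ι}
    (hGc : G c ≤ ⨆ u < c, G u) (hP : P ≤ 2 * G c) (hQ : ∀ u < c, Q ≤ 2 * H u) :
    P ^ p * Q ^ q ≤ 2 ^ p * 2 ^ q * ⨆ u, G u ^ p * H u ^ q := by
  have hGQ : G c ^ p * Q ^ q ≤ 2 ^ q * ⨆ u, G u ^ p * H u ^ q := by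
    refine rpow_mul_le_of_le_iSup₂ hp hGc fun u hu => ?_
    calc G u ^ p * Q ^ q ≤ G u ^ p * (2 * H u) ^ q := by gcongr; exact hQ u hu
      _ = 2 ^ q * (G u ^ p * H u ^ q) := by rw [mul_rpow_of_nonneg _ _ hq.le]; ring
      _ ≤ 2 ^ q * ⨆ u, G u ^ p * H u ^ q := by
        gcongr; exact le_iSup (fun u => G u ^ p * H u ^ q) u
  calc P ^ p * Q ^ q ≤ (2 * G c) ^ p * Q ^ q := by gcongr
    _ = 2 ^ p * (G c ^ p * Q ^ q) := by rw [mul_rpow_of_nonneg _ _ hp.le]; ring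
    _ ≤ 2 ^ p * 2 ^ q * ⨆ u, G u ^ p * H u ^ q := by rw [mul_assoc]; gcongr

theorem rpow_mul_rpow_le_of_forall_le_add {ι : Type*} [CompleteLinearOrder ι] {p q : ℝ}
    (hp : 0 < p) (hq : 0 < q) {G K H L : ι → ℝ≥0∞} {P Q : ℝ≥0∞} (hG : Monotone G)
    (hG_left : ∀ c, G c ≤ ⨆ u < c, G u) (hH_right : ∀ c, H c ≤ ⨆ u > c, H u)
    (hP : ∀ w, P ≤ G w + K w) (hQ : ∀ w, Q ≤ H w + L w) :
    P ^ p * Q ^ q ≤ 2 ^ p * 2 ^ q * ((⨆ w, G w ^ p * H w ^ q) + ⨆ w, K w ^ p * L w ^ q) := by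
  by_cases hKL : ∃ w, P ≤ 2 * K w ∧ Q ≤ 2 * L w
  · obtain ⟨w, hPw, hQw⟩ := hKL
    calc P ^ p * Q ^ q ≤ 2 ^ p * 2 ^ q * (K w ^ p * L w ^ q) :=
          rpow_mul_rpow_le_of_le_two_mul hp.le hq.le hPw hQw
      _ ≤ _ := by gcongr; exact le_add_left (le_iSup (fun w => K w ^ p * L w ^ q) w)
  push Not at hKL
  have hH_of_not_G : ∀ w, ¬ P ≤ 2 * G w → Q ≤ 2 * H w := fun w hw =>
    ((le_two_mul_or_le_two_mul_of_le_add (hQ w)).resolve_right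
      (hKL w ((le_two_mul_or_le_two_mul_of_le_add (hP w)).resolve_left hw)).not_ge)
  refine le_trans ?_ (mul_le_mul_right le_self_add _)
  -- Left of `c`, `P ≤ 2 G` fails and hence `Q ≤ 2 H` holds; right of `c`, `P ≤ 2 G` holds.
  set Y := {w | P ≤ 2 * G w}
  set c := sInf Y
  by_cases hc : P ≤ 2 * G c
  · exact rpow_mul_rpow_le_of_le_two_mul_of_forall_lt hp hq (hG_left c) hc
      fun u hu => hH_of_not_G u fun hPu => (sInf_le (show u ∈ Y from hPu)).not_gt hu
  · have hPu (u : ι) (hu : c < u) : P ≤ 2 * G u := by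
      obtain ⟨y, hy, hyu⟩ := sInf_lt_iff.1 hu
      exact hy.trans (by gcongr; exact hG hyu.le)
    have := rpow_mul_rpow_le_of_le_two_mul_of_forall_lt (ι := ιᵒᵈ) hq hp (G := H) (H := G)
      (hH_right c) (hH_of_not_G c hc) hPu
    simp only [mul_comm] at this ⊢
    exact this

section Continuity

variable {X α : Type*} [MeasurableSpace X] [LinearOrder α] [TopologicalSpace α] [OrderTopology α]
  [DenselyOrdered α] [FirstCountableTopology α]

theorem setLIntegral_preimage_Iio_le_iSup (μ : Measure X) [SFinite μ] (f : X → ℝ≥0∞)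
    (φ : X → α) (c : α) :
    ∫⁻ t in φ ⁻¹' Iio c, f t ∂μ ≤ ⨆ u < c, ∫⁻ t in φ ⁻¹' Iio u, f t ∂μ := by
  by_cases hc : ∃ y, y < c
  · obtain ⟨y, hy⟩ := hc
    obtain ⟨u, hu_mono, hu_mem, hu_lim⟩ := exists_seq_strictMono_tendsto' hy
    have hcover : φ ⁻¹' Iio c = ⋃ n, φ ⁻¹' Iio (u n) := by
      ext t
      simp only [mem_preimage, mem_Iio, mem_iUnion]
      exact ⟨fun ht => (hu_lim.eventually (lt_mem_nhds ht)).exists,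
        fun ⟨n, hn⟩ => hn.trans (hu_mem n).2⟩
    have hmono : Monotone fun n => φ ⁻¹' Iio (u n) :=
      fun m n hmn => preimage_mono (Iio_subset_Iio (hu_mono.monotone hmn))
    rw [← withDensity_apply', hcover, hmono.measure_iUnion]
    refine iSup_le fun n => ?_
    rw [withDensity_apply']
    exact le_iSup₂ (f := fun v _ => ∫⁻ t in φ ⁻¹' Iio v, f t ∂μ) (u n) (hu_mem n).2
  · have : φ ⁻¹' Iio c = ∅ := eq_empty_of_forall_notMem fun t ht => hc ⟨φ t, ht⟩
    simp [this]

theorem setLIntegral_preimage_Ioi_le_iSup (μ : Measure X) [SFinite μ] (f : X → ℝ≥0∞)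
    (φ : X → α) (c : α) :
    ∫⁻ t in φ ⁻¹' Ioi c, f t ∂μ ≤ ⨆ u > c, ∫⁻ t in φ ⁻¹' Ioi u, f t ∂μ :=
  setLIntegral_preimage_Iio_le_iSup (α := αᵒᵈ) μ f φ c

end Continuity

theorem setLIntegral_le_const_mul_setLIntegral {X : Type*} [MeasurableSpace X] {μ : Measure X}
    {s S : Set X} (hs : MeasurableSet s) (hsS : s ⊆ S) {c : ℝ≥0∞} (hc : c ≠ ⊤)
    {f F : X → ℝ≥0∞} (h : ∀ t ∈ s, f t ≤ c * F t) :
    ∫⁻ t in s, f t ∂μ ≤ c * ∫⁻ t in S, F t ∂μ :=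
  calc ∫⁻ t in s, f t ∂μ ≤ ∫⁻ t in s, c * F t ∂μ := setLIntegral_mono' hs h
    _ ≤ ∫⁻ t in S, c * F t ∂μ := lintegral_mono_set hsS
    _ = c * ∫⁻ t in S, F t ∂μ := lintegral_const_mul' c F hc

theorem lintegral_le_setLIntegral_Iio_add_setLIntegral_Ioi (μ : Measure ℝ)
    [NullSingletonClass μ] {F f₁ f₂ : ℝ → ℝ≥0∞} (h₁ : F ≤ f₁) (h₂ : F ≤ f₂) (c : EReal) :
    ∫⁻ t, F t ∂μ ≤
      ∫⁻ t in (↑) ⁻¹' Iio c, f₁ t ∂μ + ∫⁻ t in (↑) ⁻¹' Ioi c, f₂ t ∂μ := by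
  have hc : μ (((↑) : ℝ → EReal) ⁻¹' {c}) = 0 :=
    (subsingleton_singleton.preimage EReal.coe_injective).measure_zero μ
  have hcompl : ((((↑) : ℝ → EReal) ⁻¹' Iio c)ᶜ : Set ℝ) =ᵐ[μ] ((↑) : ℝ → EReal) ⁻¹' Ioi c := by
    rw [← preimage_compl, compl_Iio, ← Ioi_insert, insert_eq, preimage_union]
    exact union_ae_eq_right_of_ae_eq_empty (ae_eq_empty.2 hc)
  rw [← lintegral_add_compl F (A := (↑) ⁻¹' Iio c)
      (measurableSet_Iio.preimage measurable_coe_real_ereal),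
    setLIntegral_congr hcompl]
  gcongr with t t
  exacts [h₁ t, h₂ t]

theorem setLIntegral_Iio_restrict_Ioi (f : ℝ → ℝ≥0∞) (x : ℝ) :
    ∫⁻ t in Iio x, f t ∂(volume.restrict (Ioi 0)) = ∫⁻ t in Ioo 0 x, f t := by
  rw [Measure.restrict_restrict measurableSet_Iio, Iio_inter_Ioi]

theorem setLIntegral_Ioi_restrict_Ioi (f : ℝ → ℝ≥0∞) {x : ℝ} (hx : 0 ≤ x) :
    ∫⁻ t in Ioi x, f t ∂(volume.restrict (Ioi 0)) = ∫⁻ t in Ioi x, f t := by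
  rw [Measure.restrict_restrict measurableSet_Ioi, inter_eq_left.2 (Ioi_subset_Ioi hx)]

theorem rpow_mul_le_essSup_of_monotone_of_antitone {φ R : ℝ → ℝ≥0∞} {p : ℝ} (hp : 0 < p)
    (hφ : Monotone φ) (hR : Antitone R) {x : ℝ} (hx : 0 < x) (hφx : φ x ≤ ⨆ u < x, φ u) :
    φ x ^ p * R x ≤ essSup (fun u => φ u ^ p * R u) (volume.restrict (Ioi 0)) := by
  refine rpow_mul_le_of_le_iSup₂ hp hφx fun u hu => ?_
  have hvol : volume (Ioo (max u 0) x) ≠ 0 := by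
    simp [Real.volume_Ioo, hu, hx]
  obtain ⟨v, hv, hFv⟩ := Measure.exists_mem_of_measure_ne_zero_of_ae hvol
    (ae_restrict_of_ae_restrict_of_subset (fun t ht => (le_max_right u 0).trans_lt ht.1)
      (ae_le_essSup (fun u => φ u ^ p * R u)))
  calc φ u ^ p * R x ≤ φ v ^ p * R v := by
        gcongr
        · exact hφ ((le_max_left u 0).trans hv.1.le)
        · exact hR hv.2.le
    _ ≤ _ := hFv

theorem iSup_ereal_le_essSup (f₁ f₂ : ℝ → ℝ≥0∞) {p q : ℝ} (hp : 0 < p) (hq : 0 < q) :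
    ⨆ c : EReal, (∫⁻ t in (↑) ⁻¹' Iio c, f₁ t ∂(volume.restrict (Ioi 0))) ^ p *
        (∫⁻ t in (↑) ⁻¹' Ioi c, f₂ t ∂(volume.restrict (Ioi 0))) ^ q ≤
      essSup (fun x => (∫⁻ t in Ioo 0 x, f₁ t) ^ p * (∫⁻ t in Ioi x, f₂ t) ^ q)
        (volume.restrict (Ioi 0)) := by
  refine iSup_le fun c => ?_
  induction c using EReal.rec with
  | bot => simp [hp]
  | top => simp [hq]
  | coe x =>
    rw [EReal.preimage_coe_Iio, EReal.preimage_coe_Ioi, setLIntegral_Iio_restrict_Ioi]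
    rcases le_or_gt x 0 with hx | hx
    · simp [Ioo_eq_empty hx.not_gt, hp]
    rw [setLIntegral_Ioi_restrict_Ioi _ hx.le]
    refine rpow_mul_le_essSup_of_monotone_of_antitone hp
      (fun u v huv => lintegral_mono_set (Ioo_subset_Ioo_right huv))
      (fun u v huv => rpow_le_rpow (lintegral_mono_set (Ioi_subset_Ioi huv)) hq.le) hx ?_
    have := setLIntegral_preimage_Iio_le_iSup (volume.restrict (Ioi 0)) f₁ id x
    simp only [preimage_id, setLIntegral_Iio_restrict_Ioi] at this
    exact this

theorem lintegral_div_add_rpow_mul_le_split (μ : Measure ℝ) [NullSingletonClass μ]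
    (a g : ℝ → ℝ≥0∞) {r : ℝ≥0∞} (hr : r ≠ ⊤) {β : ℝ} (hβ : 0 ≤ β) (c : EReal) :
    ∫⁻ t, (r / (r + a t)) ^ β * g t ∂μ ≤
      ∫⁻ t in (↑) ⁻¹' Iio c, g t ∂μ + r ^ β * ∫⁻ t in (↑) ⁻¹' Ioi c, a t ^ (-β) * g t ∂μ := by
  rw [← lintegral_const_mul' _ _ (rpow_ne_top_of_nonneg hβ hr)]
  refine lintegral_le_setLIntegral_Iio_add_setLIntegral_Ioi μ
    (fun t => mul_le_of_le_one_left zero_le (div_add_rpow_le_one _ _ hβ)) (fun t => ?_) c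
  calc (r / (r + a t)) ^ β * g t ≤ r ^ β * a t ^ (-β) * g t := by
        gcongr; exact div_add_rpow_le _ _ hβ
    _ = _ := mul_assoc _ _ _

theorem lintegral_div_add_rpow_mul_le_split' (μ : Measure ℝ) [NullSingletonClass μ]
    (a h : ℝ → ℝ≥0∞) {r : ℝ≥0∞} (hr0 : r ≠ 0) (hrt : r ≠ ⊤) {α : ℝ} (hα : 0 ≤ α) (c : EReal) :
    ∫⁻ t, (a t / (a t + r)) ^ α * h t ∂μ ≤
      ∫⁻ t in (↑) ⁻¹' Ioi c, h t ∂μ + r ^ (-α) * ∫⁻ t in (↑) ⁻¹' Iio c, a t ^ α * h t ∂μ := by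
  rw [← lintegral_const_mul' _ _ (rpow_ne_top_of_ne_zero hr0 hrt), add_comm]
  refine lintegral_le_setLIntegral_Iio_add_setLIntegral_Ioi μ (fun t => ?_)
    (fun t => mul_le_of_le_one_left zero_le (div_add_rpow_le_one _ _ hα)) c
  calc (a t / (a t + r)) ^ α * h t ≤ a t ^ α * r ^ (-α) * h t := by
        gcongr; exact div_add_rpow_le _ _ hα
    _ = _ := by ring

theorem rpow_mul_rpow_le_essSup_add_essSup (a g h : ℝ → ℝ≥0∞) {α β : ℝ} (hα : 0 < α)
    (hβ : 0 < β) {x : ℝ} (hx0 : a x ≠ 0) (hxt : a x ≠ ⊤) :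
    (∫⁻ t in Ioi 0, (a x / (a x + a t)) ^ β * g t) ^ (1 / β) *
        (∫⁻ t in Ioi 0, (a t / (a t + a x)) ^ α * h t) ^ (1 / α) ≤
      2 ^ (1 / β) * 2 ^ (1 / α) *
        (essSup (fun x => (∫⁻ t in Ioo 0 x, g t) ^ (1 / β) * (∫⁻ t in Ioi x, h t) ^ (1 / α))
            (volume.restrict (Ioi 0)) +
          essSup (fun x => (∫⁻ t in Ioi x, a t ^ (-β) * g t) ^ (1 / β) *
            (∫⁻ t in Ioo 0 x, a t ^ α * h t) ^ (1 / α)) (volume.restrict (Ioi 0))) := by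
  set μ := volume.restrict (Ioi (0 : ℝ))
  have hglue := rpow_mul_rpow_le_of_forall_le_add (ι := EReal) (one_div_pos.2 hβ)
    (one_div_pos.2 hα) (fun c d hcd => lintegral_mono_set (preimage_mono (Iio_subset_Iio hcd)))
    (setLIntegral_preimage_Iio_le_iSup μ g _) (setLIntegral_preimage_Ioi_le_iSup μ h _)
    (lintegral_div_add_rpow_mul_le_split μ a g hxt hβ.le)
    (lintegral_div_add_rpow_mul_le_split' μ a h hx0 hxt hα.le)
  refine hglue.trans (mul_le_mul_right (add_le_add
    (iSup_ereal_le_essSup g h (one_div_pos.2 hβ) (one_div_pos.2 hα)) ?_) _)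
  simp only [rpow_mul_rpow_neg_cancel hx0 hxt hα hβ]
  simpa only [mul_comm] using iSup_ereal_le_essSup (fun t => a t ^ α * h t)
    (fun t => a t ^ (-β) * g t) (one_div_pos.2 hα) (one_div_pos.2 hβ)

theorem MonotoneOn.pos_and_lt_top_of_ae {a : ℝ → ℝ≥0∞} (ha : MonotoneOn a (Ioi 0))
    (hae : ∀ᵐ x ∂(volume.restrict (Ioi 0)), 0 < a x ∧ a x < ∞) {x : ℝ} (hx : 0 < x) :
    0 < a x ∧ a x < ∞ := by
  obtain ⟨y, hy, hay⟩ := Measure.exists_mem_of_measure_ne_zero_of_ae (s := Ioo 0 x)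
    (by simp [hx]) (ae_restrict_of_ae_restrict_of_subset Ioo_subset_Ioi_self hae)
  obtain ⟨z, hz, haz⟩ := Measure.exists_mem_of_measure_ne_zero_of_ae (s := Ioi x)
    (by simp) (ae_restrict_of_ae_restrict_of_subset (Ioi_subset_Ioi hx.le) hae)
  exact ⟨hay.1.trans_le (ha hy.1 hx hy.2.le), (ha hx (hx.trans hz) hz.le).trans_lt haz.2⟩

theorem lintegral_Ioo_le_and_rpow_mul_lintegral_Ioi_le {a : ℝ → ℝ≥0∞} (ha : MonotoneOn a (Ioi 0))
    (g : ℝ → ℝ≥0∞) {β : ℝ} (hβ : 0 < β) {x : ℝ} (hx : 0 < x) (hx0 : a x ≠ 0) (hxt : a x ≠ ⊤) :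
    ∫⁻ t in Ioo 0 x, g t ≤ 2 ^ β * ∫⁻ t in Ioi 0, (a x / (a x + a t)) ^ β * g t ∧
      a x ^ β * ∫⁻ t in Ioi x, a t ^ (-β) * g t ≤
        2 ^ β * ∫⁻ t in Ioi 0, (a x / (a x + a t)) ^ β * g t := by
  have h2 : (2 : ℝ≥0∞) ^ β ≠ ⊤ := rpow_ne_top_of_nonneg hβ.le ofNat_ne_top
  constructor
  · refine setLIntegral_le_const_mul_setLIntegral measurableSet_Ioo Ioo_subset_Ioi_self h2
      fun t ht => ?_
    calc g t = (a x / max (a x) (a t)) ^ β * g t := by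
          rw [max_eq_left (ha ht.1 hx ht.2.le), ENNReal.div_self hx0 hxt, one_rpow, one_mul]
      _ ≤ _ := div_max_rpow_mul_le _ _ _ hβ.le
  · refine (lintegral_const_mul_le _ _).trans (setLIntegral_le_const_mul_setLIntegral
      measurableSet_Ioi (Ioi_subset_Ioi hx.le) h2 fun t ht => ?_)
    calc a x ^ β * (a t ^ (-β) * g t) = (a x / max (a x) (a t)) ^ β * g t := by
          rw [max_eq_right (ha hx (hx.trans ht) ht.le), div_rpow_eq_mul_rpow_neg _ _ hβ.le,
            mul_assoc]
      _ ≤ _ := div_max_rpow_mul_le _ _ _ hβ.le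

theorem lintegral_Ioi_le_and_rpow_neg_mul_lintegral_Ioo_le {a : ℝ → ℝ≥0∞}
    (ha : MonotoneOn a (Ioi 0)) (h : ℝ → ℝ≥0∞) {α : ℝ} (hα : 0 < α) {x : ℝ} (hx : 0 < x)
    (hpos : ∀ t, x < t → a t ≠ 0 ∧ a t ≠ ⊤) :
    ∫⁻ t in Ioi x, h t ≤ 2 ^ α * ∫⁻ t in Ioi 0, (a t / (a t + a x)) ^ α * h t ∧
      a x ^ (-α) * ∫⁻ t in Ioo 0 x, a t ^ α * h t ≤
        2 ^ α * ∫⁻ t in Ioi 0, (a t / (a t + a x)) ^ α * h t := by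
  have h2 : (2 : ℝ≥0∞) ^ α ≠ ⊤ := rpow_ne_top_of_nonneg hα.le ofNat_ne_top
  constructor
  · refine setLIntegral_le_const_mul_setLIntegral measurableSet_Ioi (Ioi_subset_Ioi hx.le) h2
      fun t ht => ?_
    calc h t = (a t / max (a t) (a x)) ^ α * h t := by
          rw [max_eq_left (ha hx (hx.trans ht) ht.le), ENNReal.div_self (hpos t ht).1
            (hpos t ht).2, one_rpow, one_mul]
      _ ≤ _ := div_max_rpow_mul_le _ _ _ hα.le
  · refine (lintegral_const_mul_le _ _).trans (setLIntegral_le_const_mul_setLIntegral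
      measurableSet_Ioo Ioo_subset_Ioi_self h2 fun t ht => ?_)
    calc a x ^ (-α) * (a t ^ α * h t) = (a t / max (a t) (a x)) ^ α * h t := by
          rw [max_eq_right (ha ht.1 hx ht.2.le), div_rpow_eq_mul_rpow_neg _ _ hα.le]
          ring
      _ ≤ _ := div_max_rpow_mul_le _ _ _ hα.le

theorem le_four_mul_rpow_mul_rpow_of_monotoneOn {a : ℝ → ℝ≥0∞} (ha : MonotoneOn a (Ioi 0))
    (hpos : ∀ t, 0 < t → a t ≠ 0 ∧ a t ≠ ⊤) (g h : ℝ → ℝ≥0∞) {α β : ℝ} (hα : 0 < α)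
    (hβ : 0 < β) {x : ℝ} (hx : 0 < x) :
    let A := (∫⁻ t in Ioi 0, (a x / (a x + a t)) ^ β * g t) ^ (1 / β) *
      (∫⁻ t in Ioi 0, (a t / (a t + a x)) ^ α * h t) ^ (1 / α)
    (∫⁻ t in Ioo 0 x, g t) ^ (1 / β) * (∫⁻ t in Ioi x, h t) ^ (1 / α) ≤ 4 * A ∧
      (∫⁻ t in Ioi x, a t ^ (-β) * g t) ^ (1 / β) *
        (∫⁻ t in Ioo 0 x, a t ^ α * h t) ^ (1 / α) ≤ 4 * A := by
  obtain ⟨hg₁, hg₂⟩ := lintegral_Ioo_le_and_rpow_mul_lintegral_Ioi_le ha g hβ hx (hpos x hx).1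
    (hpos x hx).2
  obtain ⟨hh₁, hh₂⟩ := lintegral_Ioi_le_and_rpow_neg_mul_lintegral_Ioo_le ha h hα hx
    fun t ht => hpos t (hx.trans ht)
  refine ⟨rpow_one_div_mul_rpow_one_div_le_four_mul hα hβ hg₁ hh₁, ?_⟩
  rw [← rpow_mul_rpow_neg_cancel (hpos x hx).1 (hpos x hx).2 hα hβ]
  exact rpow_one_div_mul_rpow_one_div_le_four_mul hα hβ hg₂ hh₂

/-- Gluing lemma (Lemma 2.7): for `α, β > 0`, a nondecreasing weight `a` on `(0,∞)` and
nonnegative measurable `g, h`, with `𝒜(x,t) = a x / (a x + a t)`,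
`esssup_x (∫_0^∞ 𝒜(x,t)^β g)^{1/β} (∫_0^∞ 𝒜(t,x)^α h)^{1/α}
  ≈ esssup_x (∫_0^x g)^{1/β} (∫_x^∞ h)^{1/α}
    + esssup_x (∫_x^∞ a^{-β} g)^{1/β} (∫_0^x a^α h)^{1/α}`,
with equivalence constants depending only on `α` and `β`. -/
theorem gluing_integral_integral (α β : ℝ) (hα : 0 < α) (hβ : 0 < β) :
    ∃ c C : ℝ≥0∞, 0 < c ∧ c < ∞ ∧ 0 < C ∧ C < ∞ ∧
      ∀ a g h : ℝ → ℝ≥0∞, Measurable a → Measurable g → Measurable h →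
        MonotoneOn a (Ioi 0) →
        (∀ᵐ x ∂(volume.restrict (Ioi (0:ℝ))), 0 < a x ∧ a x < ∞) →
        let A := essSup (fun x =>
            (∫⁻ t in Ioi (0:ℝ), (a x / (a x + a t)) ^ β * g t) ^ (1 / β) *
            (∫⁻ t in Ioi (0:ℝ), (a t / (a t + a x)) ^ α * h t) ^ (1 / α))
          (volume.restrict (Ioi (0:ℝ)))
        let B := essSup (fun x =>
              (∫⁻ t in Ioo (0:ℝ) x, g t) ^ (1 / β) * (∫⁻ t in Ioi x, h t) ^ (1 / α))
            (volume.restrict (Ioi (0:ℝ)))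
          + essSup (fun x =>
              (∫⁻ t in Ioi x, a t ^ (-β) * g t) ^ (1 / β) *
              (∫⁻ t in Ioo (0:ℝ) x, a t ^ α * h t) ^ (1 / α))
            (volume.restrict (Ioi (0:ℝ)))
        c * B ≤ A ∧ A ≤ C * B := by
  refine ⟨8⁻¹, 2 ^ (1 / β) * 2 ^ (1 / α), by simp, by simp, by positivity,
    mul_lt_top (rpow_lt_top_of_nonneg (one_div_pos.2 hβ).le ofNat_ne_top)
      (rpow_lt_top_of_nonneg (one_div_pos.2 hα).le ofNat_ne_top), ?_⟩
  intro a g h _ _ _ ha hae A B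
  constructor
  · have hpos (t : ℝ) (ht : 0 < t) : a t ≠ 0 ∧ a t ≠ ⊤ :=
      ⟨(ha.pos_and_lt_top_of_ae hae ht).1.ne', (ha.pos_and_lt_top_of_ae hae ht).2.ne⟩
    have hle := (ae_restrict_mem (μ := volume) measurableSet_Ioi).mono fun x (hx : 0 < x) =>
      le_four_mul_rpow_mul_rpow_of_monotoneOn ha hpos g h hα hβ hx
    calc 8⁻¹ * B ≤ 8⁻¹ * (4 * A + 4 * A) := mul_le_mul_right (add_le_add
          ((essSup_mono_ae (hle.mono fun x hx => hx.1)).trans_eq essSup_const_mul)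
          ((essSup_mono_ae (hle.mono fun x hx => hx.2)).trans_eq essSup_const_mul)) _
      _ = A := by
          rw [← add_mul, ← mul_assoc, show (4 + 4 : ℝ≥0∞) = 8 by norm_num,
            ENNReal.inv_mul_cancel (by norm_num) (by norm_num), one_mul]
  · exact essSup_le_of_ae_le _ <| hae.mono fun x hx =>
      rpow_mul_rpow_le_essSup_add_essSup a g h hα hβ hx.1.ne' hx.2.ne
end

section
/- Let 0 < p₁, p₂, q₁, q₂ < ∞, let v₁, v₂ be weights on (0,∞), let u₁ ∈ Ω̃_{q₁} and u₂ ∈ Ω_{q₂}. Then for every nonnegative measurable function f on (0,∞), ‖f‖_{M(Cop_{p₁,q₁}(u₁,v₁), Ces_{p₂,q₂}(u₂,v₂))} = ( ‖f^{p₁}‖_{M( Cop_{q₁/p₁}(u₁^{p₁}), Ces_{p₂/p₁, q₂/p₁}(u₂^{p₁}, v₁^{−p₁} v₂^{p₁}) )} )^{1/p₁}. -/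
open MeasureTheory ENNReal Set Filter

/-- `‖f‖_{p,s}`: the Lebesgue functional `(∫_s f^p)^{1/p}` for `p < ∞`,
and `esssup_s f` for `p = ∞`. -/
noncomputable def wNorm (p : ℝ≥0∞) (f : ℝ → ℝ≥0∞) (s : Set ℝ) : ℝ≥0∞ :=
  if p = ∞ then essSup f (volume.restrict s)
  else (∫⁻ x in s, f x ^ p.toReal) ^ (1 / p.toReal)

/-- The weighted Cesàro functional `‖f‖_{Ces_{p,q}(u,v)} = ‖ t ↦ ‖f‖_{p,v,(0,t)} ‖_{q,u,(0,∞)}`. -/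
noncomputable def cesaroNorm (p q : ℝ≥0∞) (u v : ℝ → ℝ≥0∞) (f : ℝ → ℝ≥0∞) : ℝ≥0∞ :=
  wNorm q (fun t => wNorm p (fun x => f x * v x) (Ioo 0 t) * u t) (Ioi 0)

/-- The weighted Copson functional `‖f‖_{Cop_{p,q}(u,v)} = ‖ t ↦ ‖f‖_{p,v,(t,∞)} ‖_{q,u,(0,∞)}`. -/
noncomputable def copsonNorm (p q : ℝ≥0∞) (u v : ℝ → ℝ≥0∞) (f : ℝ → ℝ≥0∞) : ℝ≥0∞ :=
  wNorm q (fun t => wNorm p (fun x => f x * v x) (Ioi t) * u t) (Ioi 0)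

/-- The multiplier functional `‖f‖_{M(X,Y)} = sup { ‖f·g‖_Y / ‖g‖_X :
g nonnegative measurable, g not a.e. zero on (0,∞) }`. -/
noncomputable def multNorm (X Y : (ℝ → ℝ≥0∞) → ℝ≥0∞) (f : ℝ → ℝ≥0∞) : ℝ≥0∞ :=
  ⨆ (g : ℝ → ℝ≥0∞) (_ : Measurable g ∧
      ¬ (∀ᵐ x ∂(volume.restrict (Ioi (0:ℝ))), g x = 0)),
    Y (fun x => f x * g x) / X g

/-- A weight on `(0,∞)`: measurable, positive and finite a.e. on `(0,∞)`. -/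
def IsWeightOn (v : ℝ → ℝ≥0∞) : Prop :=
  Measurable v ∧ ∀ᵐ x ∂(volume.restrict (Ioi (0:ℝ))), 0 < v x ∧ v x < ∞

/-- `u ∈ Ω_q`: `0 < ‖u‖_{q,(t,∞)} < ∞` for all `t > 0`. -/
def MemOmega (q : ℝ≥0∞) (u : ℝ → ℝ≥0∞) : Prop :=
  Measurable u ∧ ∀ t : ℝ, 0 < t → 0 < wNorm q u (Ioi t) ∧ wNorm q u (Ioi t) < ∞

/-- `u ∈ Ω̃_q`: `0 < ‖u‖_{q,(0,t)} < ∞` for all `t > 0`. -/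
def MemOmegaDual (q : ℝ≥0∞) (u : ℝ → ℝ≥0∞) : Prop :=
  Measurable u ∧ ∀ t : ℝ, 0 < t → 0 < wNorm q u (Ioo 0 t) ∧ wNorm q u (Ioo 0 t) < ∞

/-- The exponent `p'`: `p/(1−p)` if `p < 1`, `∞` if `p = 1`, `p/(p−1)` if `p > 1`. -/
noncomputable def dualExp (p : ℝ) : ℝ≥0∞ :=
  if p < 1 then ENNReal.ofReal (p / (1 - p))
  else if p = 1 then ∞
  else ENNReal.ofReal (p / (p - 1))

/-- An admissible function: continuous and strictly increasing on `[0,∞)`,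
vanishing at `0` and tending to `∞` at `∞`. -/
def AdmissibleFn (U : ℝ → ℝ≥0∞) : Prop :=
  ContinuousOn U (Ici 0) ∧ StrictMonoOn U (Ici 0) ∧ U 0 = 0 ∧
    Tendsto U atTop (nhds ∞)

/-- φ is equivalent to ψ on `(0,∞)` up to multiplicative constants. -/
def EquivOn (φ ψ : ℝ → ℝ≥0∞) : Prop :=
  ∃ c C : ℝ≥0∞, 0 < c ∧ C < ∞ ∧ ∀ x ∈ Ioi (0:ℝ), c * ψ x ≤ φ x ∧ φ x ≤ C * ψ x

/-- `φ ∈ Q_U`: φ is non-degenerate and `U`-quasiconcave, i.e. φ is equivalent to a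
nondecreasing function on `(0,∞)`, `φ/U` is equivalent to a nonincreasing function on
`(0,∞)`, and `lim_{t→0+} φ(t) = lim_{t→∞} 1/φ(t) = lim_{t→∞} φ(t)/U(t)
= lim_{t→0+} U(t)/φ(t) = 0`. -/
def MemQClass (U φ : ℝ → ℝ≥0∞) : Prop :=
  (∃ ψ : ℝ → ℝ≥0∞, MonotoneOn ψ (Ioi 0) ∧ EquivOn φ ψ) ∧
  (∃ ψ : ℝ → ℝ≥0∞, AntitoneOn ψ (Ioi 0) ∧ EquivOn (fun x => φ x / U x) ψ) ∧
  Tendsto φ (nhdsWithin 0 (Ioi 0)) (nhds 0) ∧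
  Tendsto (fun t => (φ t)⁻¹) atTop (nhds 0) ∧
  Tendsto (fun t => φ t / U t) atTop (nhds 0) ∧
  Tendsto (fun t => U t / φ t) (nhdsWithin 0 (Ioi 0)) (nhds 0)

/- The substitution `h = (g v₁)^{p₁}` is a bijection, modulo null sets, between the test functions
of the two multiplier functionals. Raising the inner and outer exponents of a Copson or Cesàro
functional to the power `1/p₁` while raising the weights and the function to the power `p₁`
raises the functional to the power `p₁`, so the two quotients under the suprema agree up to this
power, and so do the suprema. -/

def IsTestFn (g : ℝ → ℝ≥0∞) : Prop :=
  Measurable g ∧ ¬ (∀ᵐ x ∂(volume.restrict (Ioi (0:ℝ))), g x = 0)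

lemma IsTestFn.rpow {g : ℝ → ℝ≥0∞} (hg : IsTestFn g) {r : ℝ} (hr : 0 < r) :
    IsTestFn (fun x => g x ^ r) := by
  refine ⟨hg.1.pow_const r, fun hzero => hg.2 ?_⟩
  filter_upwards [hzero] with x hx
  simpa [ENNReal.rpow_eq_zero_iff, hr, hr.not_gt] using hx

lemma IsWeightOn.inv {v : ℝ → ℝ≥0∞} (hv : IsWeightOn v) : IsWeightOn (fun x => (v x)⁻¹) := by
  refine ⟨hv.1.inv, ?_⟩
  filter_upwards [hv.2] with x hx
  exact ⟨ENNReal.inv_pos.2 hx.2.ne, ENNReal.inv_lt_top.2 hx.1⟩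

lemma IsTestFn.mul_weight {g v : ℝ → ℝ≥0∞} (hg : IsTestFn g) (hv : IsWeightOn v) :
    IsTestFn (fun x => g x * v x) := by
  refine ⟨hg.1.mul hv.1, fun hzero => hg.2 ?_⟩
  filter_upwards [hzero, hv.2] with x hx hvx
  exact (mul_eq_zero.1 hx).resolve_right hvx.1.ne'

lemma wNorm_ofReal {p : ℝ} (hp : 0 < p) (f : ℝ → ℝ≥0∞) (s : Set ℝ) :
    wNorm (ENNReal.ofReal p) f s = (∫⁻ x in s, f x ^ p) ^ (1 / p) := by
  rw [wNorm, if_neg ENNReal.ofReal_ne_top, ENNReal.toReal_ofReal hp.le]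

lemma wNorm_congr_ae {p : ℝ≥0∞} {f g : ℝ → ℝ≥0∞} {s : Set ℝ}
    (hfg : f =ᵐ[volume.restrict s] g) : wNorm p f s = wNorm p g s := by
  unfold wNorm
  split_ifs
  · exact essSup_congr_ae hfg
  · exact congrArg (· ^ _) (lintegral_congr_ae (hfg.fun_comp (· ^ p.toReal)))

lemma wNorm_ofReal_div_rpow {p r : ℝ} (hp : 0 < p) (hr : 0 < r) (f : ℝ → ℝ≥0∞) (s : Set ℝ) :
    wNorm (ENNReal.ofReal (p / r)) (fun x => f x ^ r) s = wNorm (ENNReal.ofReal p) f s ^ r := by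
  have hexp : r * (p / r) = p := by field_simp
  simp only [wNorm_ofReal (div_pos hp hr), wNorm_ofReal hp, ← ENNReal.rpow_mul, hexp]
  congr 1
  field_simp

section CopsonCesaro

variable (p q : ℝ≥0∞) (u : ℝ → ℝ≥0∞) {v v' f f' : ℝ → ℝ≥0∞}

lemma copsonNorm_congr_ae
    (h : ∀ᵐ x ∂(volume.restrict (Ioi (0:ℝ))), f x * v x = f' x * v' x) :
    copsonNorm p q u v f = copsonNorm p q u v' f' := by
  refine wNorm_congr_ae ?_
  filter_upwards [ae_restrict_mem measurableSet_Ioi] with t ht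
  rw [wNorm_congr_ae (ae_restrict_of_ae_restrict_of_subset (Ioi_subset_Ioi ht.le) h)]

lemma cesaroNorm_congr_ae
    (h : ∀ᵐ x ∂(volume.restrict (Ioi (0:ℝ))), f x * v x = f' x * v' x) :
    cesaroNorm p q u v f = cesaroNorm p q u v' f' := by
  refine wNorm_congr_ae (Eventually.of_forall fun t => ?_)
  exact congrArg (· * u t)
    (wNorm_congr_ae (ae_restrict_of_ae_restrict_of_subset Ioo_subset_Ioi_self h))

end CopsonCesaro

section RpowScaling

variable {p q r : ℝ} (hp : 0 < p) (hq : 0 < q) (hr : 0 < r) (u v f : ℝ → ℝ≥0∞)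
include hp hq hr

lemma copsonNorm_ofReal_div_rpow :
    copsonNorm (ENNReal.ofReal (p / r)) (ENNReal.ofReal (q / r)) (fun x => u x ^ r)
        (fun x => v x ^ r) (fun x => f x ^ r)
      = copsonNorm (ENNReal.ofReal p) (ENNReal.ofReal q) u v f ^ r := by
  simp only [copsonNorm, ← ENNReal.mul_rpow_of_nonneg _ _ hr.le,
    wNorm_ofReal_div_rpow hp hr, wNorm_ofReal_div_rpow hq hr]

lemma cesaroNorm_ofReal_div_rpow :
    cesaroNorm (ENNReal.ofReal (p / r)) (ENNReal.ofReal (q / r)) (fun x => u x ^ r)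
        (fun x => v x ^ r) (fun x => f x ^ r)
      = cesaroNorm (ENNReal.ofReal p) (ENNReal.ofReal q) u v f ^ r := by
  simp only [cesaroNorm, ← ENNReal.mul_rpow_of_nonneg _ _ hr.le,
    wNorm_ofReal_div_rpow hp hr, wNorm_ofReal_div_rpow hq hr]

end RpowScaling

lemma copsonNorm_one_mul_weight_rpow {p q : ℝ} (hp : 0 < p) (hq : 0 < q) (u v g : ℝ → ℝ≥0∞) :
    copsonNorm 1 (ENNReal.ofReal (q / p)) (fun x => u x ^ p) (fun _ => 1)
        (fun x => (g x * v x) ^ p)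
      = copsonNorm (ENNReal.ofReal p) (ENNReal.ofReal q) u v g ^ p := by
  rw [← copsonNorm_ofReal_div_rpow hp hq hp, div_self hp.ne', ENNReal.ofReal_one]
  exact copsonNorm_congr_ae _ _ _
    (Eventually.of_forall fun x => by simp [ENNReal.mul_rpow_of_nonneg _ _ hp.le])

lemma cesaroNorm_mul_weight_rpow {p₁ p₂ q₂ : ℝ} (hp₁ : 0 < p₁) (hp₂ : 0 < p₂) (hq₂ : 0 < q₂)
    (u₂ v₂ f g : ℝ → ℝ≥0∞) {v₁ : ℝ → ℝ≥0∞}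
    (hv₁ : ∀ᵐ x ∂(volume.restrict (Ioi (0:ℝ))), 0 < v₁ x ∧ v₁ x < ∞) :
    cesaroNorm (ENNReal.ofReal (p₂ / p₁)) (ENNReal.ofReal (q₂ / p₁))
        (fun x => u₂ x ^ p₁) (fun x => v₁ x ^ (-p₁) * v₂ x ^ p₁)
        (fun x => f x ^ p₁ * (g x * v₁ x) ^ p₁)
      = cesaroNorm (ENNReal.ofReal p₂) (ENNReal.ofReal q₂) u₂ v₂ (fun x => f x * g x) ^ p₁ := by
  rw [← cesaroNorm_ofReal_div_rpow hp₂ hq₂ hp₁]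
  refine cesaroNorm_congr_ae _ _ _ ?_
  filter_upwards [hv₁] with x hx
  have hcancel : v₁ x ^ p₁ * v₁ x ^ (-p₁) = 1 := by
    rw [← ENNReal.rpow_add _ _ hx.1.ne' hx.2.ne, add_neg_cancel, ENNReal.rpow_zero]
  simp only [ENNReal.mul_rpow_of_nonneg _ _ hp₁.le]
  calc f x ^ p₁ * (g x ^ p₁ * v₁ x ^ p₁) * (v₁ x ^ (-p₁) * v₂ x ^ p₁)
      = f x ^ p₁ * g x ^ p₁ * v₂ x ^ p₁ * (v₁ x ^ p₁ * v₁ x ^ (-p₁)) := by ring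
    _ = _ := by rw [hcancel, mul_one]

lemma multNorm_eq_rpow_of_substitution {X Y X' Y' : (ℝ → ℝ≥0∞) → ℝ≥0∞} {f f' : ℝ → ℝ≥0∞}
    {r : ℝ} (hr : 0 < r) (Φ : (ℝ → ℝ≥0∞) → ℝ → ℝ≥0∞)
    (hΦ : ∀ g, IsTestFn g → IsTestFn (Φ g))
    (hquot : ∀ g, IsTestFn g →
      Y' (fun x => f' x * Φ g x) / X' (Φ g) = (Y (fun x => f x * g x) / X g) ^ r)
    (hsurj : ∀ h, IsTestFn h → ∃ g, IsTestFn g ∧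
      Y' (fun x => f' x * h x) / X' h = Y' (fun x => f' x * Φ g x) / X' (Φ g)) :
    multNorm X Y f = multNorm X' Y' f' ^ (1 / r) := by
  refine le_antisymm (iSup₂_le fun g hg => ?_) ?_
  · calc Y (fun x => f x * g x) / X g
        = (Y' (fun x => f' x * Φ g x) / X' (Φ g)) ^ (1 / r) := by
          rw [hquot g hg, one_div, ENNReal.rpow_rpow_inv hr.ne']
      _ ≤ multNorm X' Y' f' ^ (1 / r) :=
          ENNReal.rpow_le_rpow (le_iSup₂_of_le (Φ g) (hΦ g hg) le_rfl) (by positivity)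
  · rw [one_div, ENNReal.rpow_inv_le_iff hr]
    refine iSup₂_le fun h hh => ?_
    obtain ⟨g, hg, hgh⟩ := hsurj h hh
    rw [hgh, hquot g hg]
    exact ENNReal.rpow_le_rpow (le_iSup₂_of_le g hg le_rfl) hr.le

theorem multiplier_reduction_general (p₁ p₂ q₁ q₂ : ℝ)
    (hp₁ : 0 < p₁) (hp₂ : 0 < p₂) (hq₁ : 0 < q₁) (hq₂ : 0 < q₂)
    (u₁ u₂ v₁ v₂ : ℝ → ℝ≥0∞) (hv₁ : IsWeightOn v₁)
    (f : ℝ → ℝ≥0∞) :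
    multNorm (copsonNorm (ENNReal.ofReal p₁) (ENNReal.ofReal q₁) u₁ v₁)
        (cesaroNorm (ENNReal.ofReal p₂) (ENNReal.ofReal q₂) u₂ v₂) f
      = (multNorm
          (copsonNorm 1 (ENNReal.ofReal (q₁ / p₁)) (fun x => u₁ x ^ p₁) (fun _ => 1))
          (cesaroNorm (ENNReal.ofReal (p₂ / p₁)) (ENNReal.ofReal (q₂ / p₁))
            (fun x => u₂ x ^ p₁) (fun x => v₁ x ^ (-p₁) * v₂ x ^ p₁))
          (fun x => f x ^ p₁)) ^ (1 / p₁) := by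
  refine multNorm_eq_rpow_of_substitution hp₁ (fun g x => (g x * v₁ x) ^ p₁)
    (fun g hg => (hg.mul_weight hv₁).rpow hp₁)
    (fun g _ => by
      rw [copsonNorm_one_mul_weight_rpow hp₁ hq₁,
        cesaroNorm_mul_weight_rpow hp₁ hp₂ hq₂ _ _ _ _ hv₁.2, ENNReal.div_rpow_of_nonneg _ _ hp₁.le]) fun h hh => ?_
  refine ⟨fun x => h x ^ (1 / p₁) * (v₁ x)⁻¹, (hh.rpow (by positivity)).mul_weight hv₁.inv, ?_⟩
  have hsubst : ∀ᵐ x ∂(volume.restrict (Ioi (0:ℝ))),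
      h x = (h x ^ (1 / p₁) * (v₁ x)⁻¹ * v₁ x) ^ p₁ := by
    filter_upwards [hv₁.2] with x hx
    rw [mul_assoc, ENNReal.inv_mul_cancel hx.1.ne' hx.2.ne, mul_one, one_div,
      ENNReal.rpow_inv_rpow hp₁.ne']
  rw [copsonNorm_congr_ae _ _ _ (hsubst.mono fun x hx => by rw [hx]),
    cesaroNorm_congr_ae _ _ _ (hsubst.mono fun x hx => by rw [hx])]

/-- Proposition 3.1: reduction of the multiplier problem between
`Cop_{p₁,q₁}(u₁,v₁)` and `Ces_{p₂,q₂}(u₂,v₂)` to three parameters and three weights. -/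
theorem multiplier_reduction (p₁ p₂ q₁ q₂ : ℝ)
    (hp₁ : 0 < p₁) (hp₂ : 0 < p₂) (hq₁ : 0 < q₁) (hq₂ : 0 < q₂)
    (u₁ u₂ v₁ v₂ : ℝ → ℝ≥0∞) (hv₁ : IsWeightOn v₁) (hv₂ : IsWeightOn v₂)
    (hu₁ : MemOmegaDual (ENNReal.ofReal q₁) u₁)
    (hu₂ : MemOmega (ENNReal.ofReal q₂) u₂)
    (f : ℝ → ℝ≥0∞) (hf : Measurable f) :
    multNorm (copsonNorm (ENNReal.ofReal p₁) (ENNReal.ofReal q₁) u₁ v₁)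
        (cesaroNorm (ENNReal.ofReal p₂) (ENNReal.ofReal q₂) u₂ v₂) f
      = (multNorm
          (copsonNorm 1 (ENNReal.ofReal (q₁ / p₁)) (fun x => u₁ x ^ p₁) (fun _ => 1))
          (cesaroNorm (ENNReal.ofReal (p₂ / p₁)) (ENNReal.ofReal (q₂ / p₁))
            (fun x => u₂ x ^ p₁) (fun x => v₁ x ^ (-p₁) * v₂ x ^ p₁))
          (fun x => f x ^ p₁)) ^ (1 / p₁) :=
  multiplier_reduction_general p₁ p₂ q₁ q₂ hp₁ hp₂ hq₁ hq₂ u₁ u₂ v₁ v₂ hv₁ f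
end

section
/- Let 0 < p ≤ 1, let v be a weight on (0,∞), u ∈ Ω̃₁ and w ∈ Ω_p. Define ω(x) := (∫_0^x u(t) dt)^{−1} (∫_x^∞ w(t)^p dt)^{1/p} v(x). Then for every nonnegative measurable f on (0,∞), ‖f‖_{M(Cop₁(u), Ces_{p,p}(w,v))} ≈ ‖f·ω‖_{p',(0,∞)}, with equivalence constants depending only on p. -/
open MeasureTheory ENNReal Set Filter

/-!
By Fubini on the triangle `0 < t < x`, `‖g‖_{Cop₁(u)} = ∫_0^∞ g U` with `U(x) = ∫_0^x u`, and
`‖f g‖_{Ces_{p,p}(w,v)}^p = ∫_0^∞ (f g v)^p W` with `W(x) = ∫_x^∞ w^p`. As `0 < U < ∞` on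
`(0,∞)`, the substitution `G = g U` turns the multiplier norm into `sup_G ‖G h‖_p / ‖G‖_1` with
`h = f ω`, the norm of `h` in `M(L¹, L^p)`, and this is exactly `‖h‖_{p'}`. For `p < 1`, Hölder
with exponents `1/p` and `1/(1-p)` gives `≤`, and testing with `G ≤ h^{p'}` of finite integral
gives `≥`; for `p = 1`, test with indicators of finite-measure sets on which `h` exceeds a level.
So the equivalence holds with `c = C = 1`.
-/

section Triangle

variable {μ : Measure ℝ} [SFinite μ] {c : ℝ} {a b : ℝ → ℝ≥0∞}

theorem setLIntegral_Ioi_tail_mul_eq (ha : Measurable a) (hb : Measurable b) :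
    ∫⁻ t in Ioi c, (∫⁻ x in Ioi t, a x ∂μ) * b t ∂μ
      = ∫⁻ x in Ioi c, a x * ∫⁻ t in Ioo c x, b t ∂μ ∂μ := by
  set K : ℝ → ℝ → ℝ≥0∞ := fun t x => (Ioi t).indicator (fun x => a x * b t) x
  have hK : Measurable (Function.uncurry K) :=
    Measurable.ite (measurableSet_lt measurable_fst measurable_snd)
      ((ha.comp measurable_snd).mul (hb.comp measurable_fst)) measurable_const
  have inner_x : ∀ t ∈ Ioi c, (∫⁻ x in Ioi t, a x ∂μ) * b t = ∫⁻ x in Ioi c, K t x ∂μ := by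
    intro t ht
    rw [lintegral_indicator measurableSet_Ioi, Measure.restrict_restrict measurableSet_Ioi,
      Ioi_inter_Ioi, sup_eq_left.2 (le_of_lt ht), lintegral_mul_const _ ha]
  have inner_t : ∀ x, ∫⁻ t in Ioi c, K t x ∂μ = a x * ∫⁻ t in Ioo c x, b t ∂μ := by
    intro x
    have : ∀ t, K t x = (Iio x).indicator (fun t => a x * b t) t := fun t => by
      simp only [K, indicator_apply, mem_Ioi, mem_Iio]
    simp_rw [this]
    rw [lintegral_indicator measurableSet_Iio, Measure.restrict_restrict measurableSet_Iio,
      Iio_inter_Ioi, lintegral_const_mul _ hb]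
  calc ∫⁻ t in Ioi c, (∫⁻ x in Ioi t, a x ∂μ) * b t ∂μ
      = ∫⁻ t in Ioi c, ∫⁻ x in Ioi c, K t x ∂μ ∂μ :=
        setLIntegral_congr_fun measurableSet_Ioi inner_x
    _ = ∫⁻ x in Ioi c, ∫⁻ t in Ioi c, K t x ∂μ ∂μ := lintegral_lintegral_swap hK.aemeasurable
    _ = ∫⁻ x in Ioi c, a x * ∫⁻ t in Ioo c x, b t ∂μ ∂μ := by simp_rw [inner_t]

theorem setLIntegral_Ioi_head_mul_eq (ha : Measurable a) (hb : Measurable b) :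
    ∫⁻ t in Ioi c, (∫⁻ x in Ioo c t, a x ∂μ) * b t ∂μ
      = ∫⁻ x in Ioi c, a x * ∫⁻ t in Ioi x, b t ∂μ ∂μ := by
  simpa only [mul_comm] using (setLIntegral_Ioi_tail_mul_eq (μ := μ) (c := c) hb ha).symm

end Triangle

theorem copsonNorm_one_one_eq {u g : ℝ → ℝ≥0∞} (hu : Measurable u) (hg : Measurable g) :
    copsonNorm 1 1 u (fun _ => 1) g = ∫⁻ x in Ioi 0, g x * ∫⁻ t in Ioo 0 x, u t := by
  simp only [copsonNorm, wNorm, if_neg one_ne_top, toReal_one, rpow_one, div_one, mul_one]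
  exact setLIntegral_Ioi_tail_mul_eq hg hu

theorem cesaroNorm_ofReal_eq {p : ℝ} (hp : 0 < p) {w v F : ℝ → ℝ≥0∞} (hw : Measurable w)
    (hv : Measurable v) (hF : Measurable F) :
    cesaroNorm (ENNReal.ofReal p) (ENNReal.ofReal p) w v F
      = (∫⁻ x in Ioi 0, (F x * v x) ^ p * ∫⁻ t in Ioi x, w t ^ p) ^ (1 / p) := by
  have root_mul_rpow : ∀ A B : ℝ≥0∞, (A ^ (1 / p) * B) ^ p = A * B ^ p := fun A B => by
    rw [mul_rpow_of_nonneg _ _ hp.le, ← rpow_mul, one_div_mul_cancel hp.ne', rpow_one]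
  simp only [cesaroNorm, wNorm, if_neg ofReal_ne_top, toReal_ofReal hp.le, root_mul_rpow]
  rw [setLIntegral_Ioi_head_mul_eq (a := fun x => (F x * v x) ^ p) ((hF.mul hv).pow_const p)
    (hw.pow_const p)]

section L1LpMultiplier

variable {α : Type*} [MeasurableSpace α] {μ : Measure α} {p : ℝ} {h : α → ℝ≥0∞}

/-- The multiplier norm `‖h‖_{M(L¹(μ), L^p(μ))}`. -/
noncomputable def l1LpMultNorm (μ : Measure α) (p : ℝ) (h : α → ℝ≥0∞) : ℝ≥0∞ :=
  ⨆ (g : α → ℝ≥0∞) (_ : Measurable g ∧ ¬ ∀ᵐ x ∂μ, g x = 0),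
    (∫⁻ x, (g x * h x) ^ p ∂μ) ^ (1 / p) / ∫⁻ x, g x ∂μ

theorem div_le_l1LpMultNorm {g : α → ℝ≥0∞} (hg : Measurable g) (hg0 : ∫⁻ x, g x ∂μ ≠ 0) :
    (∫⁻ x, (g x * h x) ^ p ∂μ) ^ (1 / p) / ∫⁻ x, g x ∂μ ≤ l1LpMultNorm μ p h :=
  le_iSup₂_of_le g ⟨hg, fun hae => hg0 (lintegral_congr_ae hae |>.trans lintegral_zero)⟩ le_rfl

theorem l1LpMultNorm_le_of_lt_one (hp : 0 < p) (hp1 : p < 1) (hh : AEMeasurable h μ) :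
    l1LpMultNorm μ p h ≤ (∫⁻ x, h x ^ (p / (1 - p)) ∂μ) ^ ((1 - p) / p) := by
  refine iSup₂_le fun g hg => div_le_of_le_mul ?_
  have hq : p / (1 - p) * (1 - p) = p := div_mul_cancel₀ _ (by linarith)
  have holder := lintegral_mul_norm_pow_le hg.1.aemeasurable (hh.pow_const (p / (1 - p)))
    hp.le (by linarith : 0 ≤ 1 - p) (add_sub_cancel p 1)
  simp only [← rpow_mul, hq, ← mul_rpow_of_nonneg _ _ hp.le] at holder
  calc (∫⁻ x, (g x * h x) ^ p ∂μ) ^ (1 / p)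
      ≤ ((∫⁻ x, g x ∂μ) ^ p * (∫⁻ x, h x ^ (p / (1 - p)) ∂μ) ^ (1 - p)) ^ (1 / p) := by
        gcongr
    _ = (∫⁻ x, h x ^ (p / (1 - p)) ∂μ) ^ ((1 - p) / p) * ∫⁻ x, g x ∂μ := by
        rw [mul_rpow_of_nonneg _ _ (by positivity), ← rpow_mul, ← rpow_mul, mul_one_div_cancel
          hp.ne', rpow_one, mul_one_div, mul_comm]

theorem le_mul_rpow_of_le_rpow (hp : 0 < p) (hp1 : p < 1) {b c : ℝ≥0∞}
    (hb : b ≤ c ^ (p / (1 - p))) : b ≤ (b * c) ^ p := by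
  have hbc : b ^ ((1 - p) / p) ≤ c := by
    rwa [← inv_div p (1 - p), rpow_inv_le_iff (div_pos hp (by linarith))]
  calc b = (b ^ (1 + (1 - p) / p)) ^ p := by
        rw [← rpow_mul, add_mul, one_mul, div_mul_cancel₀ _ hp.ne', add_sub_cancel, rpow_one]
    _ = (b * b ^ ((1 - p) / p)) ^ p := by
        rw [rpow_add_of_nonneg _ _ zero_le_one (by bound), rpow_one]
    _ ≤ (b * c) ^ p := by gcongr

theorem lintegral_le_of_forall_lintegral_ne_top_le [SigmaFinite μ] {F : α → ℝ≥0∞}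
    (hF : Measurable F) {C : ℝ≥0∞}
    (hC : ∀ b : α → ℝ≥0∞, Measurable b → b ≤ F → ∫⁻ x, b x ∂μ ≠ ∞ → ∫⁻ x, b x ∂μ ≤ C) :
    ∫⁻ x, F x ∂μ ≤ C := by
  refine lintegral_le_of_forall_fin_meas_le C fun s hs hμs => ?_
  set b : ℕ → α → ℝ≥0∞ := fun n => s.indicator fun x => min (F x) n
  have hb : ∀ n, Measurable (b n) := fun n => (hF.min measurable_const).indicator hs
  have hb_mono : Monotone b := fun m n hmn x =>
    indicator_le_indicator (min_le_min_left _ (Nat.cast_le.2 hmn))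
  have hb_sup : ∀ x, ⨆ n, b n x = s.indicator F x := fun x => by
    by_cases hx : x ∈ s
    · simp only [b, indicator_of_mem hx]
      rw [← inf_iSup_eq, iSup_natCast, inf_top_eq]
    · simp only [b, indicator_of_notMem hx, iSup_const]
  calc ∫⁻ x in s, F x ∂μ = ∫⁻ x, ⨆ n, b n x ∂μ := by
        simp only [hb_sup, lintegral_indicator hs]
    _ = ⨆ n, ∫⁻ x, b n x ∂μ := lintegral_iSup hb hb_mono
    _ ≤ C := iSup_le fun n => hC (b n) (hb n)
        (fun x => (indicator_le_self _ _ x).trans (min_le_left _ _)) ?_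
  refine ne_top_of_le_ne_top (mul_ne_top (natCast_ne_top n) hμs) ?_
  calc ∫⁻ x, b n x ∂μ ≤ ∫⁻ x, s.indicator (fun _ => (n : ℝ≥0∞)) x ∂μ :=
        lintegral_mono fun x => indicator_le_indicator (min_le_right _ _)
    _ = n * μ s := by rw [lintegral_indicator_const hs]

theorem le_l1LpMultNorm_of_lt_one [SigmaFinite μ] (hp : 0 < p) (hp1 : p < 1)
    (hh : Measurable h) :
    (∫⁻ x, h x ^ (p / (1 - p)) ∂μ) ^ ((1 - p) / p) ≤ l1LpMultNorm μ p h := by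
  have hq : 0 < p / (1 - p) := div_pos hp (by linarith)
  rw [← inv_div p (1 - p), rpow_inv_le_iff hq]
  refine lintegral_le_of_forall_lintegral_ne_top_le (hh.pow_const _) fun b hb hbh hb_top => ?_
  set B := ∫⁻ x, b x ∂μ
  rcases eq_or_ne B 0 with hB0 | hB0
  · simp [hB0]
  rw [← rpow_inv_le_iff hq, inv_div]
  -- `b` itself is the test function: `b ≤ (b h)^p` pointwise
  calc B ^ ((1 - p) / p) = B ^ (1 / p + -1) := by congr 1; field_simp; ring
    _ = B ^ (1 / p) / B := by rw [rpow_add _ _ hB0 hb_top, rpow_neg_one, ← div_eq_mul_inv]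
    _ ≤ (∫⁻ x, (b x * h x) ^ p ∂μ) ^ (1 / p) / B := by
        gcongr
        exact lintegral_mono fun x => le_mul_rpow_of_le_rpow hp hp1 (hbh x)
    _ ≤ l1LpMultNorm μ p h := div_le_l1LpMultNorm hb hB0

theorem l1LpMultNorm_one_le : l1LpMultNorm μ 1 h ≤ essSup h μ := by
  refine iSup₂_le fun g hg => div_le_of_le_mul ?_
  simp only [rpow_one, div_one]
  calc ∫⁻ x, g x * h x ∂μ ≤ ∫⁻ x, g x * essSup h μ ∂μ :=
        lintegral_mono_ae <| (ae_le_essSup h).mono fun x hx => by gcongr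
    _ = essSup h μ * ∫⁻ x, g x ∂μ := by rw [lintegral_mul_const _ hg.1, mul_comm]

theorem essSup_le_l1LpMultNorm_one [SigmaFinite μ] (hh : Measurable h) :
    essSup h μ ≤ l1LpMultNorm μ 1 h := by
  refine le_of_forall_lt_imp_le_of_dense fun c hc => ?_
  have hlevel : 0 < μ {x | c < h x} := by
    refine pos_iff_ne_zero.2 fun h0 => hc.not_ge (essSup_le_of_ae_le c ?_)
    exact ae_iff.2 (by simpa only [not_le] using h0)
  obtain ⟨S, hS, hSc, hS0, hS_top⟩ :=
    Measure.exists_subset_measure_lt_top (measurableSet_lt measurable_const hh) hlevel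
  have hint : ∫⁻ x, S.indicator 1 x ∂μ = μ S := lintegral_indicator_one hS
  refine le_trans ?_ (div_le_l1LpMultNorm (p := 1) (measurable_one.indicator hS)
    (by rw [hint]; exact hS0.ne'))
  simp only [rpow_one, div_one, hint]
  rw [ENNReal.le_div_iff_mul_le (Or.inl hS0.ne') (Or.inl hS_top.ne)]
  calc c * μ S = ∫⁻ x in S, c ∂μ := by rw [setLIntegral_const]
    _ ≤ ∫⁻ x in S, h x ∂μ := setLIntegral_mono hh fun x hx => (hSc hx).le
    _ = ∫⁻ x, S.indicator 1 x * h x ∂μ := by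
        simp only [← indicator_mul_left, Pi.one_apply, one_mul, lintegral_indicator hS]

theorem iSup_mul_weight_eq_l1LpMultNorm {U : α → ℝ≥0∞} (hU : Measurable U)
    (hU_pos : ∀ᵐ x ∂μ, U x ≠ 0 ∧ U x ≠ ∞) :
    ⨆ (g : α → ℝ≥0∞) (_ : Measurable g ∧ ¬ ∀ᵐ x ∂μ, g x = 0),
      (∫⁻ x, (g x * U x * h x) ^ p ∂μ) ^ (1 / p) / ∫⁻ x, g x * U x ∂μ
      = l1LpMultNorm μ p h := by
  apply le_antisymm
  · refine iSup₂_le fun g ⟨hg, hg0⟩ =>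
      le_iSup₂_of_le (fun x => g x * U x) ⟨hg.mul hU, fun hae => hg0 ?_⟩ le_rfl
    filter_upwards [hae, hU_pos] with x hx hUx
    exact (mul_eq_zero.1 hx).resolve_right hUx.1
  · refine iSup₂_le fun G ⟨hG, hG0⟩ =>
      le_iSup₂_of_le (fun x => G x / U x) ⟨hG.div hU, fun hae => hG0 ?_⟩ (le_of_eq ?_)
    · filter_upwards [hae, hU_pos] with x hx hUx
      exact (ENNReal.div_eq_zero_iff.1 hx).resolve_right hUx.2
    · have hGU : ∀ᵐ x ∂μ, G x / U x * U x = G x := by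
        filter_upwards [hU_pos] with x hUx
        exact ENNReal.div_mul_cancel hUx.1 hUx.2
      have hGUh : ∀ᵐ x ∂μ, (G x / U x * U x * h x) ^ p = (G x * h x) ^ p :=
        hGU.mono fun x hx => by rw [hx]
      rw [lintegral_congr_ae hGU, lintegral_congr_ae hGUh]

end L1LpMultiplier

theorem l1LpMultNorm_restrict_eq_wNorm {s : Set ℝ} {p : ℝ} {h : ℝ → ℝ≥0∞} (hp : 0 < p)
    (hp1 : p ≤ 1) (hh : Measurable h) :
    l1LpMultNorm (volume.restrict s) p h = wNorm (dualExp p) h s := by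
  rcases hp1.lt_or_eq with hp1 | rfl
  · have hq : 0 < p / (1 - p) := div_pos hp (by linarith)
    rw [dualExp, if_pos hp1, wNorm, if_neg ofReal_ne_top, toReal_ofReal hq.le, one_div_div]
    exact le_antisymm (l1LpMultNorm_le_of_lt_one hp hp1 hh.aemeasurable)
      (le_l1LpMultNorm_of_lt_one hp hp1 hh)
  · rw [dualExp, if_neg (lt_irrefl 1), if_pos rfl, wNorm, if_pos rfl]
    exact le_antisymm l1LpMultNorm_one_le (essSup_le_l1LpMultNorm_one hh)

theorem multNorm_copson_cesaro_eq {p : ℝ} (hp : 0 < p) (hp1 : p ≤ 1) {u v w f : ℝ → ℝ≥0∞}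
    (hu : MemOmegaDual 1 u) (hv : Measurable v) (hw : Measurable w) (hf : Measurable f) :
    multNorm (copsonNorm 1 1 u (fun _ => 1))
        (cesaroNorm (ENNReal.ofReal p) (ENNReal.ofReal p) w v) f
      = wNorm (dualExp p) (fun x => f x *
          ((∫⁻ t in Ioo 0 x, u t)⁻¹ * (∫⁻ t in Ioi x, w t ^ p) ^ (1 / p) * v x)) (Ioi 0) := by
  set U : ℝ → ℝ≥0∞ := fun x => ∫⁻ t in Ioo 0 x, u t
  set W : ℝ → ℝ≥0∞ := fun x => ∫⁻ t in Ioi x, w t ^ p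
  have hUm : Measurable U :=
    Monotone.measurable fun a b hab => lintegral_mono_set (Ioo_subset_Ioo_right hab)
  have hWm : Measurable W :=
    Antitone.measurable fun a b hab => lintegral_mono_set (Ioi_subset_Ioi hab)
  have hU_pos : ∀ x ∈ Ioi (0 : ℝ), U x ≠ 0 ∧ U x ≠ ∞ := fun x hx => by
    simpa only [wNorm, if_neg one_ne_top, toReal_one, rpow_one, div_one, pos_iff_ne_zero,
      lt_top_iff_ne_top] using hu.2 x hx
  have hωm : Measurable fun x => f x * ((U x)⁻¹ * W x ^ (1 / p) * v x) :=
    hf.mul ((hUm.inv.mul (hWm.pow_const _)).mul hv)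
  rw [← l1LpMultNorm_restrict_eq_wNorm hp hp1 hωm,
    ← iSup_mul_weight_eq_l1LpMultNorm hUm (ae_restrict_of_forall_mem measurableSet_Ioi hU_pos)]
  refine iSup_congr fun g => iSup_congr fun hg => ?_
  rw [copsonNorm_one_one_eq hu.1 hg.1,
    cesaroNorm_ofReal_eq (F := fun x => f x * g x) hp hw hv (hf.mul hg.1)]
  congr 2
  refine setLIntegral_congr_fun measurableSet_Ioi fun x hx => ?_
  have hUU : U x * (U x)⁻¹ = 1 := ENNReal.mul_inv_cancel (hU_pos x hx).1 (hU_pos x hx).2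
  have root_rpow : (W x ^ (1 / p)) ^ p = W x := by
    rw [← rpow_mul, one_div_mul_cancel hp.ne', rpow_one]
  calc (f x * g x * v x) ^ p * W x
      = (U x * (U x)⁻¹ * (f x * g x * v x * W x ^ (1 / p))) ^ p := by
        rw [hUU, one_mul, mul_rpow_of_nonneg (f x * g x * v x) _ hp.le, root_rpow]
    _ = (g x * U x * (f x * ((U x)⁻¹ * W x ^ (1 / p) * v x))) ^ p := by ring_nf

/-- Multipliers from `Cop₁(u)` to `Ces_{p,p}(w,v)` for `0 < p ≤ 1`:
`‖f‖_{M(Cop₁(u), Ces_{p,p}(w,v))} ≈ ‖f·ω‖_{p',(0,∞)}` where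
`ω(x) = (∫_0^x u)⁻¹ (∫_x^∞ w^p)^{1/p} v(x)`, with constants depending only on `p`. -/
theorem multiplier_q_eq_p_le_r_eq_one (p : ℝ) (hp : 0 < p) (hp1 : p ≤ 1) :
    ∃ c C : ℝ≥0∞, 0 < c ∧ c < ∞ ∧ 0 < C ∧ C < ∞ ∧
      ∀ u v w : ℝ → ℝ≥0∞, IsWeightOn v → MemOmegaDual 1 u →
        MemOmega (ENNReal.ofReal p) w →
        ∀ f : ℝ → ℝ≥0∞, Measurable f →
          let ω : ℝ → ℝ≥0∞ := fun x =>
            (∫⁻ t in Ioo (0:ℝ) x, u t)⁻¹ * (∫⁻ t in Ioi x, w t ^ p) ^ (1 / p) * v x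
          let lhs := multNorm (copsonNorm 1 1 u (fun _ => 1))
            (cesaroNorm (ENNReal.ofReal p) (ENNReal.ofReal p) w v) f
          let rhs := wNorm (dualExp p) (fun x => f x * ω x) (Ioi 0)
          c * rhs ≤ lhs ∧ lhs ≤ C * rhs := by
  refine ⟨1, 1, one_pos, one_lt_top, one_pos, one_lt_top, fun u v w hv hu hw f hf => ?_⟩
  simp only [one_mul, multNorm_copson_cesaro_eq hp hp1 hu hv.1 hw.1 hf, le_refl, and_self]
end
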